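/- arXiv:2207.11686 — 7 statements merged into one kernel-verified Lean document; each statement's English description precedes it below -/
import Mathlib

section
/- Let n, m, p be positive integers. For i = 1,…,n let X_i ∈ ℝ^{m×p} be a fixed matrix with rows x_{i1}ᵀ,…,x_{im}ᵀ, let Y_i ∈ ℝ^m be fixed, and let R̂ ∈ ℝ^{m×m} be invertible. Let μ, v : ℝ → ℝ be differentiable with the canonical-link relation μ′(η) = v(μ(η)) for all η ∈ ℝ, and suppose v(μ(η)) > 0 for all η ∈ ℝ. Then the generalized estimating function Ψ is differentiable at every β ∈ ℝ^p and its Jacobian satisfies ∂Ψ(β)/∂βᵀ = −S(β) + E_n(β) + F_n(β), where S(β) = (1/n)Σ_{i=1}^n X_iᵀ G_i^{1/2}(β) R̂^{-1} G_i^{1/2}(β) X_i, E_n(β) = −(1/(2n))Σ_{i=1}^n Σ_{j=1}^m v′(μ_{ij}(β)) G_{ij}^{-1/2}(β)(Y_{ij} − μ_{ij}(β)) X_iᵀ G_i^{1/2}(β) R̂^{-1} ē_j ē_jᵀ X_i, and F_n(β) = (1/(2n))Σ_{i=1}^n Σ_{j=1}^m v′(μ_{ij}(β)) G_{ij}^{1/2}(β)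 x_{ij} x_{ij}ᵀ · (ē_jᵀ R̂^{-1} G_i^{-1/2}(β)(Y_i − μ_i(β))). -/
open BigOperators Matrix

noncomputable section

/-- Linear predictor `x_{ij}ᵀβ`. -/
def linPred {n m p : ℕ} (X : Fin n → Matrix (Fin m) (Fin p) ℝ)
    (β : Fin p → ℝ) (i : Fin n) (j : Fin m) : ℝ :=
  ∑ k, X i j k * β k

/-- Posited mean `μ_{ij}(β) = μ(x_{ij}ᵀβ)`. -/
def muij {n m p : ℕ} (μ : ℝ → ℝ) (X : Fin n → Matrix (Fin m) (Fin p) ℝ)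
    (β : Fin p → ℝ) (i : Fin n) (j : Fin m) : ℝ :=
  μ (linPred X β i j)

/-- Variance entry `G_{ij}(β) = v(μ_{ij}(β))`. -/
def Gij {n m p : ℕ} (μ v : ℝ → ℝ) (X : Fin n → Matrix (Fin m) (Fin p) ℝ)
    (β : Fin p → ℝ) (i : Fin n) (j : Fin m) : ℝ :=
  v (muij μ X β i j)

/-- The diagonal matrix `G_i^{1/2}(β)`. -/
def Ghalf {n m p : ℕ} (μ v : ℝ → ℝ) (X : Fin n → Matrix (Fin m) (Fin p) ℝ)
    (β : Fin p → ℝ) (i : Fin n) : Matrix (Fin m) (Fin m) ℝ :=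
  Matrix.diagonal fun j => Real.sqrt (Gij μ v X β i j)

/-- The diagonal matrix `G_i^{-1/2}(β)`. -/
def Ginvhalf {n m p : ℕ} (μ v : ℝ → ℝ) (X : Fin n → Matrix (Fin m) (Fin p) ℝ)
    (β : Fin p → ℝ) (i : Fin n) : Matrix (Fin m) (Fin m) ℝ :=
  Matrix.diagonal fun j => (Real.sqrt (Gij μ v X β i j))⁻¹

/-- The generalized estimating function
`Ψ(β) = (1/n)Σᵢ Xᵢᵀ Gᵢ^{1/2}(β) R̂⁻¹ Gᵢ^{-1/2}(β)(Yᵢ − μᵢ(β))`. -/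
def Psi {n m p : ℕ} (μ v : ℝ → ℝ) (X : Fin n → Matrix (Fin m) (Fin p) ℝ)
    (Y : Fin n → Fin m → ℝ) (R : Matrix (Fin m) (Fin m) ℝ)
    (β : Fin p → ℝ) : Fin p → ℝ :=
  (n : ℝ)⁻¹ • ∑ i, ((X i)ᵀ * Ghalf μ v X β i * R⁻¹ * Ginvhalf μ v X β i).mulVec
      fun j => Y i j - muij μ X β i j

/-- The sensitivity matrix `S(β) = (1/n)Σᵢ Xᵢᵀ Gᵢ^{1/2}(β) R̂⁻¹ Gᵢ^{1/2}(β) Xᵢ`. -/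
def Smat {n m p : ℕ} (μ v : ℝ → ℝ) (X : Fin n → Matrix (Fin m) (Fin p) ℝ)
    (R : Matrix (Fin m) (Fin m) ℝ) (β : Fin p → ℝ) : Matrix (Fin p) (Fin p) ℝ :=
  (n : ℝ)⁻¹ • ∑ i, (X i)ᵀ * Ghalf μ v X β i * R⁻¹ * Ghalf μ v X β i * X i

/-- `E_n(β) = −(1/(2n))ΣᵢΣⱼ v′(μ_{ij}(β)) G_{ij}^{-1/2}(β)(Y_{ij} − μ_{ij}(β))
  Xᵢᵀ Gᵢ^{1/2}(β) R̂⁻¹ ēⱼēⱼᵀ Xᵢ`. -/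
def Enmat {n m p : ℕ} (μ v : ℝ → ℝ) (X : Fin n → Matrix (Fin m) (Fin p) ℝ)
    (Y : Fin n → Fin m → ℝ) (R : Matrix (Fin m) (Fin m) ℝ)
    (β : Fin p → ℝ) : Matrix (Fin p) (Fin p) ℝ :=
  (-(2 * (n : ℝ))⁻¹) • ∑ i, ∑ j,
    (deriv v (muij μ X β i j) * (Real.sqrt (Gij μ v X β i j))⁻¹ *
        (Y i j - muij μ X β i j)) •
      ((X i)ᵀ * Ghalf μ v X β i * R⁻¹ * Matrix.single j j (1 : ℝ) * X i)

/-- `F_n(β) = (1/(2n))ΣᵢΣⱼ v′(μ_{ij}(β)) G_{ij}^{1/2}(β) x_{ij}x_{ij}ᵀ ·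
  (ēⱼᵀ R̂⁻¹ Gᵢ^{-1/2}(β)(Yᵢ − μᵢ(β)))`. -/
def Fnmat {n m p : ℕ} (μ v : ℝ → ℝ) (X : Fin n → Matrix (Fin m) (Fin p) ℝ)
    (Y : Fin n → Fin m → ℝ) (R : Matrix (Fin m) (Fin m) ℝ)
    (β : Fin p → ℝ) : Matrix (Fin p) (Fin p) ℝ :=
  (2 * (n : ℝ))⁻¹ • ∑ i, ∑ j,
    (deriv v (muij μ X β i j) * Real.sqrt (Gij μ v X β i j) *
        (R⁻¹ * Ginvhalf μ v X β i).mulVec (fun l => Y i l - muij μ X β i l) j) •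
      Matrix.vecMulVec (fun k => X i j k) (fun k => X i j k)

-- linear functional w ↦ ∑ k, a k * w k
def Lmap {p : ℕ} (a : Fin p → ℝ) : (Fin p → ℝ) →L[ℝ] ℝ :=
  ∑ k, a k • (ContinuousLinearMap.proj k : (Fin p → ℝ) →L[ℝ] ℝ)

lemma Lmap_apply {p : ℕ} (a w : Fin p → ℝ) : Lmap a w = ∑ k, a k * w k := by
  simp [Lmap, ContinuousLinearMap.sum_apply, smul_eq_mul]

lemma Psi_eq {n m p : ℕ} (μ v : ℝ → ℝ) (X : Fin n → Matrix (Fin m) (Fin p) ℝ)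
    (Y : Fin n → Fin m → ℝ) (R : Matrix (Fin m) (Fin m) ℝ) (β : Fin p → ℝ) (k : Fin p) :
    Psi μ v X Y R β k = (n : ℝ)⁻¹ * ∑ i, ∑ j, ∑ l,
      (X i l k * R⁻¹ l j) *
        (Real.sqrt (Gij μ v X β i l) *
          ((Real.sqrt (Gij μ v X β i j))⁻¹ * (Y i j - muij μ X β i j))) := by
  simp only [Psi, Pi.smul_apply, smul_eq_mul, Finset.sum_apply, Matrix.mulVec,
    dotProduct, Matrix.mul_apply, Ghalf, Ginvhalf, Matrix.transpose_apply,
    Matrix.diagonal_apply, mul_ite, ite_mul, mul_zero, zero_mul,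
    Finset.sum_ite_eq, Finset.sum_ite_eq', Finset.mem_univ, if_true,
    Finset.sum_mul, Finset.mul_sum]
  refine Finset.sum_congr rfl fun i _ => Finset.sum_congr rfl fun j _ =>
    Finset.sum_congr rfl fun l _ => by ring

section deriv
variable {n m p : ℕ} (X : Fin n → Matrix (Fin m) (Fin p) ℝ) (Y : Fin n → Fin m → ℝ)
  (μ v : ℝ → ℝ) (hμ : Differentiable ℝ μ) (hv : Differentiable ℝ v)
  (hlink : ∀ η : ℝ, deriv μ η = v (μ η)) (hpos : ∀ η : ℝ, 0 < v (μ η))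
  (β : Fin p → ℝ)

lemma hasFDerivAt_linPred (i : Fin n) (j : Fin m) :
    HasFDerivAt (fun b => linPred X b i j) (Lmap (fun k => X i j k)) β := by
  have : (fun b : Fin p → ℝ => linPred X b i j) = fun b => Lmap (fun k => X i j k) b := by
    funext b; rw [Lmap_apply]; rfl
  rw [this]
  exact (Lmap _).hasFDerivAt

include hμ hlink in
lemma hasFDerivAt_muij (i : Fin n) (j : Fin m) :
    HasFDerivAt (fun b => muij μ X b i j)
      (Gij μ v X β i j • Lmap (fun k => X i j k)) β := by
  have hd : HasDerivAt μ (Gij μ v X β i j) (linPred X β i j) := by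
    have := (hμ (linPred X β i j)).hasDerivAt
    rwa [hlink] at this
  exact hd.comp_hasFDerivAt β (hasFDerivAt_linPred X β i j)

include hμ hv hlink in
lemma hasFDerivAt_Gij (i : Fin n) (j : Fin m) :
    HasFDerivAt (fun b => Gij μ v X b i j)
      ((deriv v (muij μ X β i j) * Gij μ v X β i j) • Lmap (fun k => X i j k)) β := by
  have hd := (hv (muij μ X β i j)).hasDerivAt
  have := hd.comp_hasFDerivAt β (hasFDerivAt_muij X μ v hμ hlink β i j)
  rwa [smul_smul] at this

include hμ hv hlink hpos in
lemma hasFDerivAt_sqrtGij (i : Fin n) (j : Fin m) :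
    HasFDerivAt (fun b => Real.sqrt (Gij μ v X b i j))
      ((1 / (2 * Real.sqrt (Gij μ v X β i j)) *
        (deriv v (muij μ X β i j) * Gij μ v X β i j)) • Lmap (fun k => X i j k)) β := by
  have hd := Real.hasDerivAt_sqrt (ne_of_gt (hpos (linPred X β i j)))
  have := hd.comp_hasFDerivAt β (hasFDerivAt_Gij X μ v hμ hv hlink β i j)
  rwa [smul_smul] at this

include hμ hv hlink hpos in
lemma hasFDerivAt_sqrtGijinv (i : Fin n) (j : Fin m) :
    HasFDerivAt (fun b => (Real.sqrt (Gij μ v X b i j))⁻¹)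
      ((-(Real.sqrt (Gij μ v X β i j) ^ 2)⁻¹ *
        (1 / (2 * Real.sqrt (Gij μ v X β i j)) *
          (deriv v (muij μ X β i j) * Gij μ v X β i j))) • Lmap (fun k => X i j k)) β := by
  have h0 : Real.sqrt (Gij μ v X β i j) ≠ 0 :=
    ne_of_gt (Real.sqrt_pos.mpr (hpos (linPred X β i j)))
  have hd := hasDerivAt_inv h0
  have := hd.comp_hasFDerivAt β (hasFDerivAt_sqrtGij X μ v hμ hv hlink hpos β i j)
  rwa [smul_smul] at this

include hμ hlink in
lemma hasFDerivAt_resid (i : Fin n) (j : Fin m) :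
    HasFDerivAt (fun b => Y i j - muij μ X b i j)
      (-(Gij μ v X β i j • Lmap (fun k => X i j k))) β := by
  have := (hasFDerivAt_const (Y i j) β).fun_sub (hasFDerivAt_muij X μ v hμ hlink β i j)
  simpa using this

include hμ hv hlink hpos in
lemma hasFDerivAt_g (i : Fin n) (j l : Fin m) :
    HasFDerivAt (fun b => Real.sqrt (Gij μ v X b i l) *
        ((Real.sqrt (Gij μ v X b i j))⁻¹ * (Y i j - muij μ X b i j)))
      ((-(Real.sqrt (Gij μ v X β i l) * Real.sqrt (Gij μ v X β i j)) -
          2⁻¹ * deriv v (muij μ X β i j) * (Real.sqrt (Gij μ v X β i j))⁻¹ *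
            (Y i j - muij μ X β i j) * Real.sqrt (Gij μ v X β i l)) •
          Lmap (fun k => X i j k) +
        (2⁻¹ * deriv v (muij μ X β i l) * Real.sqrt (Gij μ v X β i l) *
          ((Real.sqrt (Gij μ v X β i j))⁻¹ * (Y i j - muij μ X β i j))) •
          Lmap (fun k => X i l k)) β := by
  have hraw := (hasFDerivAt_sqrtGij X μ v hμ hv hlink hpos β i l).fun_mul
    ((hasFDerivAt_sqrtGijinv X μ v hμ hv hlink hpos β i j).fun_mul
      (hasFDerivAt_resid X Y μ v hμ hlink β i j))
  refine hraw.congr_fderiv (Eq.symm ?_)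
  have hj : (0:ℝ) < Gij μ v X β i j := hpos _
  have hl : (0:ℝ) < Gij μ v X β i l := hpos _
  have hj2 : Real.sqrt (Gij μ v X β i j) * Real.sqrt (Gij μ v X β i j) = Gij μ v X β i j :=
    Real.mul_self_sqrt hj.le
  have hl2 : Real.sqrt (Gij μ v X β i l) * Real.sqrt (Gij μ v X β i l) = Gij μ v X β i l :=
    Real.mul_self_sqrt hl.le
  have hj0 : Real.sqrt (Gij μ v X β i j) ≠ 0 := ne_of_gt (Real.sqrt_pos.mpr hj)
  have hl0 : Real.sqrt (Gij μ v X β i l) ≠ 0 := ne_of_gt (Real.sqrt_pos.mpr hl)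
  ext w
  simp only [ContinuousLinearMap.add_apply, ContinuousLinearMap.coe_smul',
    ContinuousLinearMap.neg_apply, Pi.smul_apply, smul_eq_mul]
  generalize hsj : Real.sqrt (Gij μ v X β i j) = sj at hj2 hj0 ⊢
  generalize hsl : Real.sqrt (Gij μ v X β i l) = sl at hl2 hl0 ⊢
  rw [← hj2, ← hl2]
  field_simp
  ring

end deriv

section final
variable {n m p : ℕ} (μ v : ℝ → ℝ) (X : Fin n → Matrix (Fin m) (Fin p) ℝ)
  (Y : Fin n → Fin m → ℝ) (R : Matrix (Fin m) (Fin m) ℝ) (β : Fin p → ℝ)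
  (k : Fin p) (w : Fin p → ℝ)

lemma Smat_mulVec :
    (Smat μ v X R β).mulVec w k = (n : ℝ)⁻¹ * ∑ i, ∑ j, ∑ l,
      (X i l k * R⁻¹ l j) *
        ((Real.sqrt (Gij μ v X β i l) * Real.sqrt (Gij μ v X β i j)) *
          ∑ k', X i j k' * w k') := by
  simp only [Smat, Matrix.mulVec, dotProduct, Matrix.smul_apply,
    Finset.sum_apply, Matrix.mul_apply, Ghalf, Matrix.transpose_apply,
    Matrix.diagonal_apply, mul_ite, ite_mul, mul_zero, zero_mul,
    Finset.sum_ite_eq, Finset.sum_ite_eq', Finset.mem_univ, if_true,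
    Finset.sum_mul, Finset.mul_sum, smul_eq_mul, Matrix.sum_apply]
  rw [Finset.sum_comm]
  refine Finset.sum_congr rfl fun i _ => ?_
  rw [Finset.sum_comm]
  refine Finset.sum_congr rfl fun j _ => ?_
  rw [Finset.sum_comm]
  refine Finset.sum_congr rfl fun l _ => Finset.sum_congr rfl fun k' _ => by ring

lemma Enmat_mulVec :
    (Enmat μ v X Y R β).mulVec w k = (n : ℝ)⁻¹ * ∑ i, ∑ j, ∑ l,
      (X i l k * R⁻¹ l j) *
        ((-(2⁻¹ * deriv v (muij μ X β i j) * (Real.sqrt (Gij μ v X β i j))⁻¹ *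
            (Y i j - muij μ X β i j) * Real.sqrt (Gij μ v X β i l))) *
          ∑ k', X i j k' * w k') := by
  simp only [Enmat, Matrix.mulVec, dotProduct, Matrix.smul_apply,
    Finset.sum_apply, Matrix.mul_apply, Ghalf, Matrix.transpose_apply,
    Matrix.single, Matrix.of_apply,
    Matrix.diagonal_apply, mul_ite, ite_mul, mul_zero, zero_mul, ite_and,
    Finset.sum_ite_eq, Finset.sum_ite_eq', Finset.mem_univ, if_true,
    Finset.sum_mul, Finset.mul_sum, smul_eq_mul, mul_ite, mul_zero,
    Finset.sum_ite_irrel, Finset.sum_const_zero, Matrix.sum_apply]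
  rw [Finset.sum_comm]
  refine Finset.sum_congr rfl fun i _ => ?_
  rw [Finset.sum_comm]
  refine Finset.sum_congr rfl fun j _ => ?_
  rw [Finset.sum_comm]
  refine Finset.sum_congr rfl fun l _ => Finset.sum_congr rfl fun k' _ => by ring

lemma Fnmat_mulVec :
    (Fnmat μ v X Y R β).mulVec w k = (n : ℝ)⁻¹ * ∑ i, ∑ j, ∑ l,
      (X i j k * R⁻¹ j l) *
        ((2⁻¹ * deriv v (muij μ X β i j) * Real.sqrt (Gij μ v X β i j) *
            ((Real.sqrt (Gij μ v X β i l))⁻¹ * (Y i l - muij μ X β i l))) *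
          ∑ k', X i j k' * w k') := by
  simp only [Fnmat, Matrix.mulVec, dotProduct, Matrix.smul_apply,
    Finset.sum_apply, Matrix.mul_apply, Ginvhalf, Matrix.vecMulVec_apply,
    Matrix.diagonal_apply, mul_ite, ite_mul, mul_zero, zero_mul,
    Finset.sum_ite_eq, Finset.sum_ite_eq', Finset.mem_univ, if_true,
    Finset.sum_mul, Finset.mul_sum, smul_eq_mul, Matrix.sum_apply]
  rw [Finset.sum_comm]
  refine Finset.sum_congr rfl fun i _ => ?_
  rw [Finset.sum_comm]
  refine Finset.sum_congr rfl fun j _ => ?_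
  rw [Finset.sum_comm]
  refine Finset.sum_congr rfl fun l _ => Finset.sum_congr rfl fun k' _ => by ring

end final


/-- The generalized estimating function `Ψ` is differentiable at every
`β`, with Jacobian `∂Ψ(β)/∂βᵀ = −S(β) + E_n(β) + F_n(β)`. -/
theorem gee_jacobian_decomposition
    {n m p : ℕ} (hn : 0 < n) (hm : 0 < m) (hp : 0 < p)
    (X : Fin n → Matrix (Fin m) (Fin p) ℝ) (Y : Fin n → Fin m → ℝ)
    (R : Matrix (Fin m) (Fin m) ℝ) (hR : IsUnit R)
    (μ v : ℝ → ℝ) (hμ : Differentiable ℝ μ) (hv : Differentiable ℝ v)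
    (hlink : ∀ η : ℝ, deriv μ η = v (μ η)) (hpos : ∀ η : ℝ, 0 < v (μ η))
    (β : Fin p → ℝ) :
    HasFDerivAt (Psi μ v X Y R)
      (LinearMap.toContinuousLinearMap
        (Matrix.mulVecLin
          (-(Smat μ v X R β) + Enmat μ v X Y R β + Fnmat μ v X Y R β))) β := by
  rw [hasFDerivAt_pi']
  intro k
  have hk : HasFDerivAt (fun b => Psi μ v X Y R b k)
      ((n : ℝ)⁻¹ • ∑ i, ∑ j, ∑ l, (X i l k * R⁻¹ l j) •
        ((-(Real.sqrt (Gij μ v X β i l) * Real.sqrt (Gij μ v X β i j)) -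
            2⁻¹ * deriv v (muij μ X β i j) * (Real.sqrt (Gij μ v X β i j))⁻¹ *
              (Y i j - muij μ X β i j) * Real.sqrt (Gij μ v X β i l)) •
            Lmap (fun k => X i j k) +
          (2⁻¹ * deriv v (muij μ X β i l) * Real.sqrt (Gij μ v X β i l) *
            ((Real.sqrt (Gij μ v X β i j))⁻¹ * (Y i j - muij μ X β i j))) •
            Lmap (fun k => X i l k))) β := by
    have hfun : (fun b => Psi μ v X Y R b k) = fun b => (n : ℝ)⁻¹ * ∑ i, ∑ j, ∑ l,
        (X i l k * R⁻¹ l j) *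
          (Real.sqrt (Gij μ v X b i l) *
            ((Real.sqrt (Gij μ v X b i j))⁻¹ * (Y i j - muij μ X b i j))) :=
      funext fun b => Psi_eq μ v X Y R b k
    rw [hfun]
    exact HasFDerivAt.const_mul (HasFDerivAt.fun_sum fun i _ => HasFDerivAt.fun_sum fun j _ =>
      HasFDerivAt.fun_sum fun l _ =>
        HasFDerivAt.const_mul (hasFDerivAt_g X Y μ v hμ hv hlink hpos β i j l) _) _
  refine hk.congr_fderiv (Eq.symm ?_)
  ext w
  simp only [ContinuousLinearMap.coe_comp', Function.comp_apply,
    LinearMap.coe_toContinuousLinearMap', Matrix.mulVecLin_apply,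
    ContinuousLinearMap.proj_apply, Matrix.add_mulVec, Matrix.neg_mulVec,
    Pi.add_apply, Pi.neg_apply]
  rw [Smat_mulVec μ v X R β k w, Enmat_mulVec μ v X Y R β k w, Fnmat_mulVec μ v X Y R β k w]
  simp only [ContinuousLinearMap.coe_smul', Pi.smul_apply, ContinuousLinearMap.coe_sum',
    Finset.sum_apply, ContinuousLinearMap.add_apply, smul_eq_mul, Lmap_apply, mul_add,
    Finset.sum_add_distrib]
  have h2 : (∑ i : Fin n, ∑ j : Fin m, ∑ l : Fin m,
        X i l k * R⁻¹ l j *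
          (2⁻¹ * deriv v (muij μ X β i l) * Real.sqrt (Gij μ v X β i l) *
              ((Real.sqrt (Gij μ v X β i j))⁻¹ * (Y i j - muij μ X β i j)) *
            ∑ k' : Fin p, X i l k' * w k'))
      = ∑ i : Fin n, ∑ j : Fin m, ∑ l : Fin m,
          X i j k * R⁻¹ j l *
            (2⁻¹ * deriv v (muij μ X β i j) * Real.sqrt (Gij μ v X β i j) *
                ((Real.sqrt (Gij μ v X β i l))⁻¹ * (Y i l - muij μ X β i l)) *
              ∑ k' : Fin p, X i j k' * w k') :=
    Finset.sum_congr rfl fun i _ => Finset.sum_comm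
  have h1 : (∑ i : Fin n, ∑ j : Fin m, ∑ l : Fin m,
        X i l k * R⁻¹ l j *
          ((-(Real.sqrt (Gij μ v X β i l) * Real.sqrt (Gij μ v X β i j)) -
              2⁻¹ * deriv v (muij μ X β i j) * (Real.sqrt (Gij μ v X β i j))⁻¹ *
                (Y i j - muij μ X β i j) * Real.sqrt (Gij μ v X β i l)) *
            ∑ k' : Fin p, X i j k' * w k'))
      = (∑ i : Fin n, ∑ j : Fin m, ∑ l : Fin m,
          X i l k * R⁻¹ l j *
            (-(2⁻¹ * deriv v (muij μ X β i j) * (Real.sqrt (Gij μ v X β i j))⁻¹ *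
                  (Y i j - muij μ X β i j) * Real.sqrt (Gij μ v X β i l)) *
              ∑ k' : Fin p, X i j k' * w k'))
        - ∑ i : Fin n, ∑ j : Fin m, ∑ l : Fin m,
            X i l k * R⁻¹ l j *
              (Real.sqrt (Gij μ v X β i l) * Real.sqrt (Gij μ v X β i j) *
                ∑ k' : Fin p, X i j k' * w k') := by
    simp only [← Finset.sum_sub_distrib]
    exact Finset.sum_congr rfl fun i _ => Finset.sum_congr rfl fun j _ =>
      Finset.sum_congr rfl fun l _ => by ring
  rw [h1, h2]
  ring


end
end

section
/- Let p, s′ be positive integers, S a p×p real matrix, ξ ∈ ℝ^p, λ′ ≥ 0, κ > 0, and S′ ⊆ {1,…,p} with |S′| = s′. Suppose: (i) ω̄ ∈ ℝ^p is supported on S′ (ω̄_j = 0 for j ∉ S′) and satisfies ‖Sω̄ − ξ‖_∞ ≤ λ′; (ii) ω̃ ∈ ℝ^p satisfies ‖Sω̃ − ξ‖_∞ ≤ λ′ and ‖ω̃‖₁ ≤ ‖ω̄‖₁; (iii) the compatibility condition holds: for every ν ∈ ℝ^p with ν ≠ 0 and ‖ν_{(S′)^c}‖₁ ≤ ‖ν_{S′}‖₁,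 one has κ² ‖ν_{S′}‖₁² ≤ s′ · νᵀSν. Then ‖ω̃ − ω̄‖₁ ≤ 8 s′ λ′ / κ². -/
open BigOperators Matrix

/-- Rate of convergence of the constrained `ℓ1`-minimizer `ω̃` to the
population direction `ω̄` under the compatibility condition:
`‖ω̃ − ω̄‖₁ ≤ 8 s′ λ′ / κ²`. -/
theorem l1_rate_of_projection_direction
    (p s' : ℕ) (hp : 0 < p) (hs' : 0 < s')
    (S : Matrix (Fin p) (Fin p) ℝ) (ξ : Fin p → ℝ)
    (lam : ℝ) (hlam : 0 ≤ lam) (κ : ℝ) (hκ : 0 < κ)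
    (S' : Finset (Fin p)) (hcard : S'.card = s')
    (ωbar ωtil : Fin p → ℝ)
    (hsupp : ∀ j ∉ S', ωbar j = 0)
    (hbar : ∀ j, |(S.mulVec ωbar - ξ) j| ≤ lam)
    (htil : ∀ j, |(S.mulVec ωtil - ξ) j| ≤ lam)
    (hl1 : ∑ j, |ωtil j| ≤ ∑ j, |ωbar j|)
    (hcompat : ∀ ν : Fin p → ℝ, ν ≠ 0 →
      (∑ j ∈ S'ᶜ, |ν j|) ≤ ∑ j ∈ S', |ν j| →
      κ ^ 2 * (∑ j ∈ S', |ν j|) ^ 2 ≤ (s' : ℝ) * (ν ⬝ᵥ S.mulVec ν)) :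
    ∑ j, |ωtil j - ωbar j| ≤ 8 * s' * lam / κ ^ 2 := by
  set ν : Fin p → ℝ := fun j => ωtil j - ωbar j with hν
  set A : ℝ := ∑ j ∈ S', |ν j| with hA
  set B : ℝ := ∑ j ∈ S'ᶜ, |ν j| with hB
  have hA0 : 0 ≤ A := Finset.sum_nonneg fun j _ => abs_nonneg _
  have hB0 : 0 ≤ B := Finset.sum_nonneg fun j _ => abs_nonneg _
  have hsplit : ∀ f : Fin p → ℝ, ∑ j, f j = ∑ j ∈ S', f j + ∑ j ∈ S'ᶜ, f j := by
    intro f; rw [Finset.sum_add_sum_compl]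
  -- cone condition: B ≤ A
  have hcone : B ≤ A := by
    have h1 : B = ∑ j ∈ S'ᶜ, |ωtil j| := by
      apply Finset.sum_congr rfl
      intro j hj
      simp [hν, hsupp j (Finset.mem_compl.mp hj)]
    have h2 : ∑ j ∈ S', |ωtil j| + ∑ j ∈ S'ᶜ, |ωtil j| ≤ ∑ j ∈ S', |ωbar j| := by
      rw [← hsplit]
      calc ∑ j, |ωtil j| ≤ ∑ j, |ωbar j| := hl1
        _ = ∑ j ∈ S', |ωbar j| + ∑ j ∈ S'ᶜ, |ωbar j| := hsplit _
        _ = ∑ j ∈ S', |ωbar j| := by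
            have : ∑ j ∈ S'ᶜ, |ωbar j| = 0 := by
              apply Finset.sum_eq_zero
              intro j hj; rw [hsupp j (Finset.mem_compl.mp hj)]; simp
            rw [this, add_zero]
    have h3 : ∑ j ∈ S', (|ωbar j| - |ωtil j|) ≤ A := by
      apply Finset.sum_le_sum
      intro j _
      calc |ωbar j| - |ωtil j| ≤ |ωbar j - ωtil j| := abs_sub_abs_le_abs_sub _ _
        _ = |ν j| := by rw [abs_sub_comm]
    rw [h1]
    have := Finset.sum_sub_distrib (s := S') (f := fun j => |ωbar j|) (g := fun j => |ωtil j|)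
    linarith [h2, h3, this]
  -- quadratic bound: ν⬝Sν ≤ 2λ(A+B)
  have hmv : ∀ j, |(S.mulVec ν) j| ≤ 2 * lam := by
    intro j
    have : S.mulVec ν = (S.mulVec ωtil - ξ) - (S.mulVec ωbar - ξ) := by
      funext k
      simp [hν, Matrix.mulVec, dotProduct, mul_sub, Finset.sum_sub_distrib]
    rw [this]
    calc |((S.mulVec ωtil - ξ) - (S.mulVec ωbar - ξ)) j|
        ≤ |(S.mulVec ωtil - ξ) j| + |(S.mulVec ωbar - ξ) j| := by
          simp only [Pi.sub_apply]; exact abs_sub _ _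
      _ ≤ lam + lam := add_le_add (htil j) (hbar j)
      _ = 2 * lam := by ring
  have hquad : ν ⬝ᵥ S.mulVec ν ≤ 2 * lam * (A + B) := by
    calc ν ⬝ᵥ S.mulVec ν = ∑ j, ν j * (S.mulVec ν) j := rfl
      _ ≤ ∑ j, |ν j| * (2 * lam) := by
          apply Finset.sum_le_sum
          intro j _
          calc ν j * (S.mulVec ν) j ≤ |ν j * (S.mulVec ν) j| := le_abs_self _
            _ = |ν j| * |(S.mulVec ν) j| := abs_mul _ _
            _ ≤ |ν j| * (2 * lam) := by
                exact mul_le_mul_of_nonneg_left (hmv j) (abs_nonneg _)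
      _ = (∑ j, |ν j|) * (2 * lam) := by rw [← Finset.sum_mul]
      _ = 2 * lam * (A + B) := by rw [hsplit fun j => |ν j|]; ring
  by_cases hz : ν = 0
  · have : ∑ j, |ωtil j - ωbar j| = 0 := by
      apply Finset.sum_eq_zero
      intro j _
      have := congrFun hz j
      simp [hν] at this
      simpa using this
    rw [this]
    positivity
  · have hc := hcompat ν hz hcone
    have hApos : 0 < A := by
      rcases lt_or_eq_of_le hA0 with h | h
      · exact h
      · exfalso
        apply hz
        funext j
        have hall : ∀ j ∈ (Finset.univ : Finset (Fin p)), |ν j| = 0 := by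
          have : ∑ j, |ν j| = 0 := by rw [hsplit fun j => |ν j|]; nlinarith
          intro k hk
          exact (Finset.sum_eq_zero_iff_of_nonneg (fun i _ => abs_nonneg _)).mp this k hk
        exact abs_eq_zero.mp (hall j (Finset.mem_univ j))
    have hABle : A + B ≤ 2 * A := by linarith
    have hsp : (0:ℝ) < s' := by exact_mod_cast hs'
    have hkey : κ ^ 2 * A ^ 2 ≤ (s' : ℝ) * (2 * lam * (2 * A)) := by
      calc κ ^ 2 * A ^ 2 ≤ (s' : ℝ) * (ν ⬝ᵥ S.mulVec ν) := hc
        _ ≤ (s' : ℝ) * (2 * lam * (A + B)) := by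
            apply mul_le_mul_of_nonneg_left hquad (le_of_lt hsp)
        _ ≤ (s' : ℝ) * (2 * lam * (2 * A)) := by
            apply mul_le_mul_of_nonneg_left _ (le_of_lt hsp)
            apply mul_le_mul_of_nonneg_left hABle
            positivity
    have hAle : A ≤ 4 * s' * lam / κ ^ 2 := by
      rw [le_div_iff₀ (by positivity)]
      nlinarith
    calc ∑ j, |ωtil j - ωbar j| = A + B := hsplit fun j => |ν j|
      _ ≤ 2 * A := hABle
      _ ≤ 2 * (4 * s' * lam / κ ^ 2) := by linarith
      _ = 8 * s' * lam / κ ^ 2 := by ring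
end

section
/- Let p, s be positive integers, A and B p×p real matrices, L ≥ 0, S ⊆ {1,…,p} with |S| = s, and ν ∈ ℝ^p satisfying the cone condition ‖ν_{S^c}‖₁ ≤ L‖ν_S‖₁. Then |νᵀ(A − B)ν| ≤ (L+1)² s ‖A − B‖_∞ ‖ν‖₂². -/
open BigOperators Matrix

/-- For a vector `ν` in the cone `‖ν_{Sᶜ}‖₁ ≤ L‖ν_S‖₁` with `|S| = s`,
the quadratic form of the difference of two matrices satisfies
`|νᵀ(A − B)ν| ≤ (L+1)² s ‖A − B‖_∞ ‖ν‖₂²`, where `‖·‖_∞` is the entrywise max norm. -/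
theorem quadratic_form_entrywise_bound_on_cone
    (p s : ℕ) (hp : 0 < p) (hs : 0 < s)
    (A B : Matrix (Fin p) (Fin p) ℝ) (L : ℝ) (hL : 0 ≤ L)
    (S : Finset (Fin p)) (hcard : S.card = s)
    (ν : Fin p → ℝ)
    (hcone : ∑ j ∈ Sᶜ, |ν j| ≤ L * ∑ j ∈ S, |ν j|) :
    |ν ⬝ᵥ (A - B).mulVec ν| ≤
      (L + 1) ^ 2 * s * (⨆ j, ⨆ k, |A j k - B j k|) * ∑ j, (ν j) ^ 2 := by
  set M := A - B with hM
  set C : ℝ := ⨆ j, ⨆ k, |M j k| with hC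
  haveI : Nonempty (Fin p) := ⟨⟨0, hp⟩⟩
  have hCb : ∀ j k, |M j k| ≤ C := by
    intro j k
    exact le_trans
      (le_ciSup (f := fun k => |M j k|) (Set.Finite.bddAbove (Set.finite_range _)) k)
      (le_ciSup (f := fun j => ⨆ k, |M j k|) (Set.Finite.bddAbove (Set.finite_range _)) j)
  have hC0 : 0 ≤ C := le_trans (abs_nonneg _) (hCb ⟨0, hp⟩ ⟨0, hp⟩)
  -- step 1: |quadratic form| ≤ C * (∑ |ν|)^2
  have h1 : |ν ⬝ᵥ M.mulVec ν| ≤ C * (∑ j, |ν j|) ^ 2 := by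
    have : ν ⬝ᵥ M.mulVec ν = ∑ j, ∑ k, ν j * (M j k * ν k) := by
      simp [dotProduct, mulVec, Finset.mul_sum]
    rw [this]
    calc |∑ j, ∑ k, ν j * (M j k * ν k)|
        ≤ ∑ j, |∑ k, ν j * (M j k * ν k)| := Finset.abs_sum_le_sum_abs _ _
      _ ≤ ∑ j, ∑ k, |ν j * (M j k * ν k)| := by
          gcongr with j _; exact Finset.abs_sum_le_sum_abs _ _
      _ ≤ ∑ j, ∑ k, |ν j| * (C * |ν k|) := by
          gcongr with j _ k _
          rw [abs_mul, abs_mul]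
          exact mul_le_mul_of_nonneg_left
            (mul_le_mul_of_nonneg_right (hCb j k) (abs_nonneg _)) (abs_nonneg _)
      _ = C * (∑ j, |ν j|) ^ 2 := by
          simp_rw [← Finset.mul_sum, ← Finset.sum_mul]
          ring
  -- step 2: ∑ |ν| ≤ (L+1) * ∑_S |ν|
  have h2 : ∑ j, |ν j| ≤ (L + 1) * ∑ j ∈ S, |ν j| := by
    rw [← Finset.sum_add_sum_compl S]
    linarith [hcone]
  have hS0 : 0 ≤ ∑ j ∈ S, |ν j| := Finset.sum_nonneg fun _ _ => abs_nonneg _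
  have htot0 : 0 ≤ ∑ j, |ν j| := Finset.sum_nonneg fun _ _ => abs_nonneg _
  -- step 3: (∑_S |ν|)^2 ≤ s * ∑ ν^2
  have h3 : (∑ j ∈ S, |ν j|) ^ 2 ≤ (s : ℝ) * ∑ j, (ν j) ^ 2 := by
    calc (∑ j ∈ S, |ν j|) ^ 2 ≤ (S.card : ℝ) * ∑ j ∈ S, |ν j| ^ 2 :=
          sq_sum_le_card_mul_sum_sq
      _ = (s : ℝ) * ∑ j ∈ S, (ν j) ^ 2 := by rw [hcard]; simp [sq_abs]
      _ ≤ (s : ℝ) * ∑ j, (ν j) ^ 2 :=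
          mul_le_mul_of_nonneg_left
            (Finset.sum_le_sum_of_subset_of_nonneg (Finset.subset_univ S)
              (fun i _ _ => sq_nonneg (ν i))) (Nat.cast_nonneg s)
  have h4 : (∑ j, |ν j|) ^ 2 ≤ (L + 1) ^ 2 * (∑ j ∈ S, |ν j|) ^ 2 := by
    rw [← mul_pow]
    exact pow_le_pow_left₀ htot0 h2 2
  calc |ν ⬝ᵥ M.mulVec ν| ≤ C * (∑ j, |ν j|) ^ 2 := h1
    _ ≤ C * ((L + 1) ^ 2 * ((s : ℝ) * ∑ j, (ν j) ^ 2)) := by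
        refine mul_le_mul_of_nonneg_left (h4.trans ?_) hC0
        have hL1 : (0:ℝ) ≤ (L + 1) ^ 2 := by positivity
        exact mul_le_mul_of_nonneg_left h3 hL1
    _ = (L + 1) ^ 2 * s * C * ∑ j, (ν j) ^ 2 := by ring
end

section
/- Let p, s′ be positive integers, L ≥ 0, c > 0, and let S⁰ and S be p×p real matrices such that νᵀS⁰ν ≥ c‖ν‖₂² for all ν ∈ ℝ^p and ‖S − S⁰‖_∞ ≤ c/(2(L+1)² s′). Then for every subset S′ ⊆ {1,…,p} with |S′| = s′ and every ν ∈ ℝ^p satisfying the cone condition ‖ν_{(S′)^c}‖₁ ≤ L‖ν_{S′}‖₁, one has νᵀSν ≥ (c/2)‖ν‖₂², and consequently s′ · νᵀSν ≥ (c/2)‖ν_{S′}‖₁². -/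
open BigOperators Matrix

/-! The perturbation `S - S⁰` is entrywise at most `ε = c / (2(L+1)²s′)`, so its quadratic form
is at most `ε‖ν‖₁²`. On the cone, `‖ν‖₁ ≤ (L+1)‖ν_{S′}‖₁ ≤ (L+1)√s′ ‖ν‖₂` by Cauchy–Schwarz,
hence the perturbation costs at most `(c/2)‖ν‖₂²` of the lower bound `c‖ν‖₂²` for `S⁰`. -/

open Finset

section
variable {ι : Type*} [Fintype ι]

theorem abs_dotProduct_mulVec_le_of_abs_le {M : Matrix ι ι ℝ} {ε : ℝ}
    (hM : ∀ j k, |M j k| ≤ ε) (ν : ι → ℝ) :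
    |ν ⬝ᵥ M *ᵥ ν| ≤ ε * (∑ j, |ν j|) ^ 2 := by
  calc |ν ⬝ᵥ M *ᵥ ν| = |∑ i, ∑ j, ν i * M i j * ν j| := by
        simp only [dotProduct, mulVec, mul_sum, mul_assoc]
    _ ≤ ∑ i, ∑ j, |ν i * M i j * ν j| :=
        (abs_sum_le_sum_abs _ _).trans (sum_le_sum fun i _ => abs_sum_le_sum_abs _ _)
    _ ≤ ∑ i, ∑ j, ε * (|ν i| * |ν j|) := by
        gcongr with i _ j _
        rw [abs_mul, abs_mul, mul_comm |ν i|, mul_assoc]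
        exact mul_le_mul_of_nonneg_right (hM i j) (by positivity)
    _ = ε * (∑ j, |ν j|) ^ 2 := by
        rw [sq, sum_mul_sum, mul_sum]
        simp only [mul_sum]

theorem sq_sum_abs_le_card_mul_sum_sq (S' : Finset ι) (ν : ι → ℝ) :
    (∑ j ∈ S', |ν j|) ^ 2 ≤ #S' * ∑ j, ν j ^ 2 :=
  calc (∑ j ∈ S', |ν j|) ^ 2 ≤ #S' * ∑ j ∈ S', |ν j| ^ 2 := sq_sum_le_card_mul_sum_sq
    _ ≤ #S' * ∑ j, ν j ^ 2 := by
        simp only [sq_abs]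
        gcongr
        exact subset_univ S'

theorem sq_sum_abs_le_of_cone [DecidableEq ι] {S' : Finset ι} {L : ℝ} {ν : ι → ℝ}
    (hcone : ∑ j ∈ S'ᶜ, |ν j| ≤ L * ∑ j ∈ S', |ν j|) :
    (∑ j, |ν j|) ^ 2 ≤ (L + 1) ^ 2 * #S' * ∑ j, ν j ^ 2 := by
  have hl1 : ∑ j, |ν j| ≤ (L + 1) * ∑ j ∈ S', |ν j| := by
    rw [← sum_add_sum_compl S']
    linarith
  calc (∑ j, |ν j|) ^ 2 ≤ ((L + 1) * ∑ j ∈ S', |ν j|) ^ 2 :=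
        pow_le_pow_left₀ (by positivity) hl1 2
    _ = (L + 1) ^ 2 * (∑ j ∈ S', |ν j|) ^ 2 := mul_pow _ _ 2
    _ ≤ (L + 1) ^ 2 * #S' * ∑ j, ν j ^ 2 := by
        rw [mul_assoc]
        gcongr
        exact sq_sum_abs_le_card_mul_sum_sq S' ν

end

theorem div_two_mul_mul_le {c a : ℝ} (hc : 0 ≤ c) (ha : 0 ≤ a) : c / (2 * a) * a ≤ c / 2 := by
  rcases ha.eq_or_lt with rfl | ha
  · simp only [mul_zero, div_zero]
    positivity
  · rw [div_mul_eq_mul_div, mul_div_mul_right _ _ ha.ne']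

theorem compatibility_of_perturbed_matrix_general
    (p s' : ℕ)
    (L c : ℝ) (hc : 0 < c)
    (S0 S : Matrix (Fin p) (Fin p) ℝ)
    (hS0 : ∀ ν : Fin p → ℝ, c * ∑ j, (ν j) ^ 2 ≤ ν ⬝ᵥ S0.mulVec ν)
    (hclose : ∀ j k, |S j k - S0 j k| ≤ c / (2 * (L + 1) ^ 2 * s')) :
    ∀ S' : Finset (Fin p), S'.card = s' →
      ∀ ν : Fin p → ℝ, (∑ j ∈ S'ᶜ, |ν j|) ≤ L * ∑ j ∈ S', |ν j| →
        (c / 2) * ∑ j, (ν j) ^ 2 ≤ ν ⬝ᵥ S.mulVec ν ∧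
        (c / 2) * (∑ j ∈ S', |ν j|) ^ 2 ≤ (s' : ℝ) * (ν ⬝ᵥ S.mulVec ν) := by
  intro S' hcard ν hcone
  have hpert := abs_dotProduct_mulVec_le_of_abs_le (M := S - S0) hclose ν
  rw [sub_mulVec, dotProduct_sub] at hpert
  have hl1 := sq_sum_abs_le_of_cone hcone
  rw [hcard] at hl1
  have hcost : c / (2 * (L + 1) ^ 2 * s') * (∑ j, |ν j|) ^ 2 ≤ c / 2 * ∑ j, ν j ^ 2 :=
    calc _ ≤ c / (2 * ((L + 1) ^ 2 * s')) * ((L + 1) ^ 2 * s' * ∑ j, ν j ^ 2) := by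
          rw [← mul_assoc 2]
          gcongr
      _ ≤ c / 2 * ∑ j, ν j ^ 2 := by
          rw [← mul_assoc]
          gcongr
          exact div_two_mul_mul_le hc.le (by positivity)
  have hmain : c / 2 * ∑ j, ν j ^ 2 ≤ ν ⬝ᵥ S *ᵥ ν := by
    linarith [hS0 ν, (abs_le.mp hpert).1]
  refine ⟨hmain, ?_⟩
  calc c / 2 * (∑ j ∈ S', |ν j|) ^ 2 ≤ c / 2 * (s' * ∑ j, ν j ^ 2) := by
        gcongr
        simpa only [hcard] using sq_sum_abs_le_card_mul_sum_sq S' ν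
    _ = s' * (c / 2 * ∑ j, ν j ^ 2) := by ring
    _ ≤ s' * (ν ⬝ᵥ S *ᵥ ν) := by gcongr

/-- If `S⁰` satisfies `νᵀS⁰ν ≥ c‖ν‖₂²` for all `ν` and `S` is entrywise
close to `S⁰` (`‖S − S⁰‖_∞ ≤ c/(2(L+1)²s′)`), then for every set `S′` of cardinality `s′`
and every `ν` in the cone `‖ν_{(S′)ᶜ}‖₁ ≤ L‖ν_{S′}‖₁` one has `νᵀSν ≥ (c/2)‖ν‖₂²`, and
consequently `s′·νᵀSν ≥ (c/2)‖ν_{S′}‖₁²` (the compatibility condition). -/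
theorem compatibility_of_perturbed_matrix
    (p s' : ℕ) (hp : 0 < p) (hs' : 0 < s')
    (L c : ℝ) (hL : 0 ≤ L) (hc : 0 < c)
    (S0 S : Matrix (Fin p) (Fin p) ℝ)
    (hS0 : ∀ ν : Fin p → ℝ, c * ∑ j, (ν j) ^ 2 ≤ ν ⬝ᵥ S0.mulVec ν)
    (hclose : ∀ j k, |S j k - S0 j k| ≤ c / (2 * (L + 1) ^ 2 * s')) :
    ∀ S' : Finset (Fin p), S'.card = s' →
      ∀ ν : Fin p → ℝ, (∑ j ∈ S'ᶜ, |ν j|) ≤ L * ∑ j ∈ S', |ν j| →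
        (c / 2) * ∑ j, (ν j) ^ 2 ≤ ν ⬝ᵥ S.mulVec ν ∧
        (c / 2) * (∑ j ∈ S', |ν j|) ^ 2 ≤ (s' : ℝ) * (ν ⬝ᵥ S.mulVec ν) :=
  compatibility_of_perturbed_matrix_general p s' L c hc S0 S hS0 hclose
end

section
/- Let p, s₀ be positive integers, τ ≥ 0, τ₀ > 0, λ̃ ≥ 0, S ⊆ {1,…,p} with |S| = s₀, and Σ₁, Σ₂ p×p real matrices. Suppose (i) for every ν ∈ ℝ^p with ‖ν_{S^c}‖₁ ≤ τ‖ν_S‖₁ one has νᵀΣ₁ν ≥ τ₀‖ν_S‖₂² (restricted eigenvalue condition for Σ₁ with constant τ₀); (ii) ‖Σ₂ − Σ₁‖_∞ ≤ λ̃; and (iii) λ̃(1+τ)² s₀ / τ₀ ≤ 1/2. Then for every ν ∈ ℝ^p with ‖ν_{S^c}‖₁ ≤ τ‖ν_S‖₁, one has νᵀΣ₂ν ≥ (1/2)νᵀΣ₁ν ≥ (τ₀/2)‖ν_S‖₂²; in particular the restricted eigenvalue condition holds for Σ₂ with constant τ₀/2. -/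
open BigOperators Matrix

/-- Stability of the restricted eigenvalue condition under an entrywise
perturbation: if `Σ₁` satisfies the restricted eigenvalue condition with constant `τ₀`,
`‖Σ₂ − Σ₁‖_∞ ≤ λ̃`, and `λ̃(1+τ)²s₀/τ₀ ≤ 1/2`, then for every `ν` in the cone,
`νᵀΣ₂ν ≥ (1/2)νᵀΣ₁ν ≥ (τ₀/2)‖ν_S‖₂²`; in particular the restricted eigenvalue
condition holds for `Σ₂` with constant `τ₀/2`. -/
theorem restricted_eigenvalue_stability
    (p s₀ : ℕ) (hp : 0 < p) (hs₀ : 0 < s₀)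
    (τ τ₀ lamt : ℝ) (hτ : 0 ≤ τ) (hτ₀ : 0 < τ₀) (hlamt : 0 ≤ lamt)
    (S : Finset (Fin p)) (hcard : S.card = s₀)
    (Sig1 Sig2 : Matrix (Fin p) (Fin p) ℝ)
    (hRE : ∀ ν : Fin p → ℝ, (∑ j ∈ Sᶜ, |ν j|) ≤ τ * ∑ j ∈ S, |ν j| →
      τ₀ * ∑ j ∈ S, (ν j) ^ 2 ≤ ν ⬝ᵥ Sig1.mulVec ν)
    (hclose : ∀ j k, |Sig2 j k - Sig1 j k| ≤ lamt)
    (hsmall : lamt * (1 + τ) ^ 2 * s₀ / τ₀ ≤ 1 / 2) :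
    ∀ ν : Fin p → ℝ, (∑ j ∈ Sᶜ, |ν j|) ≤ τ * ∑ j ∈ S, |ν j| →
      (1 / 2) * (ν ⬝ᵥ Sig1.mulVec ν) ≤ ν ⬝ᵥ Sig2.mulVec ν ∧
      (τ₀ / 2) * ∑ j ∈ S, (ν j) ^ 2 ≤ (1 / 2) * (ν ⬝ᵥ Sig1.mulVec ν) := by
  intro ν hν
  have hS2 : (0:ℝ) ≤ ∑ j ∈ S, (ν j) ^ 2 := Finset.sum_nonneg fun _ _ => sq_nonneg _
  have hQ1 : τ₀ * ∑ j ∈ S, (ν j) ^ 2 ≤ ν ⬝ᵥ Sig1.mulVec ν := hRE ν hν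
  -- expand quadratic forms
  have expand : ∀ M : Matrix (Fin p) (Fin p) ℝ,
      ν ⬝ᵥ M.mulVec ν = ∑ i, ∑ j, ν i * M i j * ν j := by
    intro M
    simp [dotProduct, Matrix.mulVec, Finset.mul_sum, mul_assoc, mul_comm, mul_left_comm]
  -- L1 norm on S
  have hSnn : (0:ℝ) ≤ ∑ j ∈ S, |ν j| := Finset.sum_nonneg fun _ _ => abs_nonneg _
  -- total L1 norm bound
  have h1 : (∑ j, |ν j|) ≤ (1 + τ) * ∑ j ∈ S, |ν j| := by
    have := Finset.sum_add_sum_compl S (fun j => |ν j|)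
    nlinarith [hν]
  have h1nn : (0:ℝ) ≤ ∑ j, |ν j| := Finset.sum_nonneg fun _ _ => abs_nonneg _
  -- Cauchy-Schwarz
  have hCS : (∑ j ∈ S, |ν j|) ^ 2 ≤ (s₀ : ℝ) * ∑ j ∈ S, (ν j) ^ 2 := by
    have h := Finset.sum_mul_sq_le_sq_mul_sq S (fun _ => (1:ℝ)) (fun j => |ν j|)
    simp only [one_mul, one_pow, sq_abs] at h
    calc (∑ j ∈ S, |ν j|) ^ 2 ≤ (∑ _j ∈ S, (1:ℝ)) * ∑ j ∈ S, (ν j) ^ 2 := h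
      _ = (s₀ : ℝ) * ∑ j ∈ S, (ν j) ^ 2 := by simp [hcard]
  -- perturbation bound
  have hpert : |ν ⬝ᵥ Sig2.mulVec ν - ν ⬝ᵥ Sig1.mulVec ν| ≤ lamt * (∑ j, |ν j|) ^ 2 := by
    rw [expand Sig2, expand Sig1, ← Finset.sum_sub_distrib]
    simp_rw [← Finset.sum_sub_distrib]
    calc |∑ i, ∑ j, (ν i * Sig2 i j * ν j - ν i * Sig1 i j * ν j)|
        ≤ ∑ i, ∑ j, |ν i * Sig2 i j * ν j - ν i * Sig1 i j * ν j| := by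
          refine (Finset.abs_sum_le_sum_abs _ _).trans ?_
          exact Finset.sum_le_sum fun i _ => Finset.abs_sum_le_sum_abs _ _
      _ ≤ ∑ i, ∑ j, |ν i| * lamt * |ν j| := by
          refine Finset.sum_le_sum fun i _ => Finset.sum_le_sum fun j _ => ?_
          have : ν i * Sig2 i j * ν j - ν i * Sig1 i j * ν j
              = ν i * (Sig2 i j - Sig1 i j) * ν j := by ring
          rw [this, abs_mul, abs_mul]
          exact mul_le_mul_of_nonneg_right
            (mul_le_mul_of_nonneg_left (hclose i j) (abs_nonneg _)) (abs_nonneg _)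
      _ = lamt * (∑ j, |ν j|) ^ 2 := by
          rw [sq, Finset.sum_mul_sum, Finset.mul_sum]
          exact Finset.sum_congr rfl fun i _ => by
            rw [Finset.mul_sum]
            exact Finset.sum_congr rfl fun j _ => by ring
  -- key chain
  have hkey : lamt * (∑ j, |ν j|) ^ 2 ≤ (τ₀ / 2) * ∑ j ∈ S, (ν j) ^ 2 := by
    have hb : (∑ j, |ν j|) ^ 2 ≤ (1 + τ) ^ 2 * (∑ j ∈ S, |ν j|) ^ 2 := by
      have := mul_self_le_mul_self h1nn h1
      nlinarith
    have hb2 : lamt * (∑ j, |ν j|) ^ 2 ≤ lamt * (1 + τ) ^ 2 * ((s₀:ℝ) * ∑ j ∈ S, (ν j) ^ 2) := by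
      nlinarith [mul_le_mul_of_nonneg_left hCS (mul_nonneg hlamt (sq_nonneg (1+τ)))]
    have hsmall' : lamt * (1 + τ) ^ 2 * (s₀:ℝ) ≤ τ₀ / 2 := by
      rw [div_le_iff₀ hτ₀] at hsmall
      linarith
    nlinarith [mul_le_mul_of_nonneg_right hsmall' hS2]
  have habs := abs_le.mp hpert
  constructor
  · nlinarith [habs.1, hkey, hQ1]
  · linarith [hQ1]
end

section
/- Let p be a positive integer, S and S⁰ symmetric p×p real matrices, ξ ∈ ℝ^p, λ′ ≥ 0, and ω̃, ω̄ ∈ ℝ^p with ‖Sω̃ − ξ‖_∞ ≤ λ′ and ‖Sω̄ − ξ‖_∞ ≤ λ′. Then |ω̃ᵀSω̃ − ω̄ᵀS⁰ω̄| ≤ 2(‖ξ‖_∞ + λ′)‖ω̃ − ω̄‖₁ + ‖S − S⁰‖_∞ ‖ω̄‖₁². -/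
open BigOperators Matrix

/-!
Write `δ = ω̃ - ω̄`. Symmetry of `S` gives
`ω̃ᵀSω̃ - ω̄ᵀS⁰ω̄ = δᵀSω̃ + δᵀSω̄ + ω̄ᵀ(S - S⁰)ω̄`.
Both `Sω̃` and `Sω̄` lie within `λ′` of `ξ` in `ℓ∞`, so the first two terms are each at most
`(‖ξ‖_∞ + λ′)‖δ‖₁` by Hölder's inequality, and the last is at most `‖S - S⁰‖_∞ ‖ω̄‖₁²`.
-/

section Bounds

variable {ι : Type*} [Fintype ι]

lemma abs_le_iSup_abs_add_of_abs_sub_le {f ξ : ι → ℝ} {lam : ℝ}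
    (h : ∀ j, |f j - ξ j| ≤ lam) (j : ι) : |f j| ≤ (⨆ j, |ξ j|) + lam :=
  calc |f j| = |(f j - ξ j) + ξ j| := by rw [sub_add_cancel]
    _ ≤ |f j - ξ j| + |ξ j| := abs_add_le _ _
    _ ≤ lam + ⨆ j, |ξ j| := add_le_add (h j) (Finite.le_ciSup (fun j => |ξ j|) j)
    _ = (⨆ j, |ξ j|) + lam := add_comm _ _

lemma abs_dotProduct_le_of_abs_le {v w : ι → ℝ} {B : ℝ} (hw : ∀ j, |w j| ≤ B) :
    |v ⬝ᵥ w| ≤ B * ∑ j, |v j| :=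
  calc |∑ j, v j * w j| ≤ ∑ j, |v j * w j| := Finset.abs_sum_le_sum_abs _ _
    _ ≤ ∑ j, B * |v j| := Finset.sum_le_sum fun j _ => by
        rw [abs_mul, mul_comm B]
        exact mul_le_mul_of_nonneg_left (hw j) (abs_nonneg _)
    _ = B * ∑ j, |v j| := (Finset.mul_sum _ _ _).symm

lemma abs_dotProduct_mulVec_self_le (A : Matrix ι ι ℝ) (v : ι → ℝ) :
    |v ⬝ᵥ A *ᵥ v| ≤ (⨆ j, ⨆ k, |A j k|) * (∑ j, |v j|) ^ 2 := by
  set M := ⨆ j, ⨆ k, |A j k|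
  have hA : ∀ j k, |A j k| ≤ M := fun j k =>
    (Finite.le_ciSup (fun k => |A j k|) k).trans (Finite.le_ciSup (fun j => ⨆ k, |A j k|) j)
  have hrow : ∀ j, |(A *ᵥ v) j| ≤ M * ∑ k, |v k| := fun j => by
    rw [mulVec, dotProduct_comm]
    exact abs_dotProduct_le_of_abs_le (hA j)
  calc |v ⬝ᵥ A *ᵥ v| ≤ (M * ∑ k, |v k|) * ∑ j, |v j| := abs_dotProduct_le_of_abs_le hrow
    _ = M * (∑ j, |v j|) ^ 2 := by ring

end Bounds

lemma Matrix.IsSymm.dotProduct_mulVec_sub_dotProduct_mulVec {ι R : Type*} [Fintype ι] [CommRing R]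
    {S : Matrix ι ι R} (hS : S.IsSymm) (S0 : Matrix ι ι R) (x y : ι → R) :
    x ⬝ᵥ S *ᵥ x - y ⬝ᵥ S0 *ᵥ y = (x - y) ⬝ᵥ S *ᵥ x + (x - y) ⬝ᵥ S *ᵥ y + y ⬝ᵥ (S - S0) *ᵥ y := by
  have hswap : x ⬝ᵥ S *ᵥ y = y ⬝ᵥ S *ᵥ x := by
    rw [dotProduct_mulVec, ← mulVec_transpose, hS.eq, dotProduct_comm]
  simp only [sub_dotProduct, sub_mulVec, dotProduct_sub, hswap]
  ring

theorem quadratic_form_difference_bound_general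
    (p : ℕ)
    (S S0 : Matrix (Fin p) (Fin p) ℝ) (hS : S.IsSymm)
    (ξ : Fin p → ℝ) (lam : ℝ)
    (ωtil ωbar : Fin p → ℝ)
    (htil : ∀ j, |(S.mulVec ωtil - ξ) j| ≤ lam)
    (hbar : ∀ j, |(S.mulVec ωbar - ξ) j| ≤ lam) :
    |ωtil ⬝ᵥ S.mulVec ωtil - ωbar ⬝ᵥ S0.mulVec ωbar| ≤
      2 * ((⨆ j, |ξ j|) + lam) * (∑ j, |ωtil j - ωbar j|) +
        (⨆ j, ⨆ k, |S j k - S0 j k|) * (∑ j, |ωbar j|) ^ 2 := by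
  set B := (⨆ j, |ξ j|) + lam
  rw [hS.dotProduct_mulVec_sub_dotProduct_mulVec]
  calc _ ≤ |(ωtil - ωbar) ⬝ᵥ S *ᵥ ωtil| + |(ωtil - ωbar) ⬝ᵥ S *ᵥ ωbar|
        + |ωbar ⬝ᵥ (S - S0) *ᵥ ωbar| := abs_add_three _ _ _
    _ ≤ B * (∑ j, |ωtil j - ωbar j|) + B * (∑ j, |ωtil j - ωbar j|)
        + (⨆ j, ⨆ k, |S j k - S0 j k|) * (∑ j, |ωbar j|) ^ 2 :=
      add_le_add
        (add_le_add (abs_dotProduct_le_of_abs_le (abs_le_iSup_abs_add_of_abs_sub_le htil))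
          (abs_dotProduct_le_of_abs_le (abs_le_iSup_abs_add_of_abs_sub_le hbar)))
        (abs_dotProduct_mulVec_self_le (S - S0) ωbar)
    _ = _ := by ring

/-- For symmetric matrices `S`, `S⁰` and vectors `ω̃`, `ω̄` both satisfying
the `ℓ∞` constraint `‖Sω − ξ‖_∞ ≤ λ′`, the quadratic forms satisfy
`|ω̃ᵀSω̃ − ω̄ᵀS⁰ω̄| ≤ 2(‖ξ‖_∞ + λ′)‖ω̃ − ω̄‖₁ + ‖S − S⁰‖_∞‖ω̄‖₁²`. -/
theorem quadratic_form_difference_bound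
    (p : ℕ) (hp : 0 < p)
    (S S0 : Matrix (Fin p) (Fin p) ℝ) (hS : S.IsSymm) (hS0 : S0.IsSymm)
    (ξ : Fin p → ℝ) (lam : ℝ) (hlam : 0 ≤ lam)
    (ωtil ωbar : Fin p → ℝ)
    (htil : ∀ j, |(S.mulVec ωtil - ξ) j| ≤ lam)
    (hbar : ∀ j, |(S.mulVec ωbar - ξ) j| ≤ lam) :
    |ωtil ⬝ᵥ S.mulVec ωtil - ωbar ⬝ᵥ S0.mulVec ωbar| ≤
      2 * ((⨆ j, |ξ j|) + lam) * (∑ j, |ωtil j - ωbar j|) +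
        (⨆ j, ⨆ k, |S j k - S0 j k|) * (∑ j, |ωbar j|) ^ 2 :=
  quadratic_form_difference_bound_general p S S0 hS ξ lam ωtil ωbar htil hbar
end

section
/- Let (Ω, ℱ, P) be a probability space, n, m, p, s₀ positive integers, τ ≥ 1, and K, K₂, c > 0 with K₂ ≥ 1. Let X₁,…,Xₙ : Ω → ℝ^{m×p} be independent, identically distributed random matrices with rows x_{i1}ᵀ,…,x_{im}ᵀ satisfying ‖x_{ij}‖_∞ ≤ K almost surely, and let g : ℝ^p → ℝ be measurable with 1/K₂ ≤ g(x) ≤ K₂ for all x ∈ ℝ^p. Assume νᵀ E[Σ_{j=1}^m x_{1j}x_{1j}ᵀ] ν ≥ c‖ν‖₂² for all ν ∈ ℝ^p. Define the random p×p matrix H = (1/n) Σ_{i=1}^n Σ_{j=1}^m g(x_{ij}) x_{ij}x_{ij}ᵀ, and set τ₀ = c/K₂ and t = τ₀/(2(1+τ)² s₀). Then with probability at least 1 − 2p² exp(−n t² / (8 m² K₂² K⁴)), the following restricted eigenvalue property holds simultaneously for all subsets: for every S ⊆ {1,…,p} with |S| = s₀ and every ν ∈ ℝ^p with ‖ν_{S^c}‖₁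 ≤ τ‖ν_S‖₁, one has νᵀHν ≥ (τ₀/2)‖ν_S‖₂². -/
open BigOperators MeasureTheory ProbabilityTheory

lemma exp_le_cosh_add (l M w : ℝ) (hM : 0 < M) (hw : |w| ≤ M) :
    Real.exp (l * w) ≤ Real.cosh (l * M) + (Real.sinh (l * M) / M) * w := by
  obtain ⟨h1, h2⟩ := abs_le.mp hw
  have hM2 : (0:ℝ) < 2 * M := by linarith
  have ha : 0 ≤ (M - w) / (2 * M) := div_nonneg (by linarith) (by linarith)
  have hb : 0 ≤ (M + w) / (2 * M) := div_nonneg (by linarith) (by linarith)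
  have hab : (M - w) / (2 * M) + (M + w) / (2 * M) = 1 := by field_simp; ring
  have hconv := convexOn_exp.2 (Set.mem_univ (l * (-M))) (Set.mem_univ (l * M)) ha hb hab
  simp only [smul_eq_mul] at hconv
  have he : (M - w) / (2 * M) * (l * (-M)) + (M + w) / (2 * M) * (l * M) = l * w := by
    field_simp; ring
  rw [he] at hconv
  refine hconv.trans (le_of_eq ?_)
  rw [show l * -M = -(l * M) by ring, Real.cosh_eq, Real.sinh_eq, Real.exp_neg]
  field_simp
  ring

lemma mgf_le_of_bounded {Ω : Type*} [MeasurableSpace Ω] (μ : Measure Ω) [IsProbabilityMeasure μ]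
    (W : Ω → ℝ) (hW : Measurable W) (M l : ℝ) (hM : 0 < M)
    (hb : ∀ᵐ ω ∂μ, |W ω| ≤ M) (hcent : ∫ ω, W ω ∂μ = 0) :
    mgf W μ l ≤ Real.exp (l ^ 2 * M ^ 2 / 2) := by
  have hWint : Integrable W μ := by
    refine Integrable.mono' (integrable_const M) hW.aestronglyMeasurable ?_
    filter_upwards [hb] with ω h using by simpa [Real.norm_eq_abs] using h
  have hint : Integrable (fun ω => Real.cosh (l * M) + (Real.sinh (l * M) / M) * W ω) μ :=
    (integrable_const _).add (hWint.const_mul _)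
  have hle : mgf W μ l ≤ ∫ ω, (Real.cosh (l * M) + (Real.sinh (l * M) / M) * W ω) ∂μ := by
    refine integral_mono_ae ?_ hint ?_
    · refine Integrable.mono' (integrable_const (Real.exp (|l| * M)))
        ((hW.const_mul l).exp).aestronglyMeasurable ?_
      filter_upwards [hb] with ω h
      rw [Real.norm_eq_abs, Real.abs_exp, Real.exp_le_exp]
      calc l * W ω ≤ |l * W ω| := le_abs_self _
        _ = |l| * |W ω| := abs_mul _ _
        _ ≤ |l| * M := by gcongr
    · filter_upwards [hb] with ω h using exp_le_cosh_add l M (W ω) hM h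
  have : ∫ ω, (Real.cosh (l * M) + (Real.sinh (l * M) / M) * W ω) ∂μ = Real.cosh (l * M) := by
    rw [integral_add (integrable_const _) (hWint.const_mul _), integral_const,
      integral_const_mul, hcent]
    simp
  rw [this] at hle
  refine hle.trans ((Real.cosh_le_exp_half_sq (l * M)).trans (le_of_eq ?_))
  congr 1; ring

lemma hoeffding_sum_ge {Ω : Type*} [MeasurableSpace Ω] (μ : Measure Ω) [IsProbabilityMeasure μ]
    {n : ℕ} (W : Fin n → Ω → ℝ) (hmeas : ∀ i, Measurable (W i))
    (hindep : iIndepFun W μ)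
    (M ε : ℝ) (hM : 0 < M) (hε : 0 < ε)
    (hb : ∀ i, ∀ᵐ ω ∂μ, |W i ω| ≤ M) (hcent : ∀ i, ∫ ω, W i ω ∂μ = 0) :
    μ {ω | (n : ℝ) * ε ≤ ∑ i, W i ω} ≤
      ENNReal.ofReal (Real.exp (-(n : ℝ) * ε ^ 2 / (2 * M ^ 2))) := by
  set l : ℝ := ε / M ^ 2 with hl
  have hl0 : 0 < l := by positivity
  have hint : ∀ i, Integrable (fun ω => Real.exp (l * W i ω)) μ := by
    intro i
    refine Integrable.mono' (integrable_const (Real.exp (|l| * M)))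
      (((hmeas i).const_mul l).exp).aestronglyMeasurable ?_
    filter_upwards [hb i] with ω h
    rw [Real.norm_eq_abs, Real.abs_exp, Real.exp_le_exp]
    calc l * W i ω ≤ |l * W i ω| := le_abs_self _
      _ = |l| * |W i ω| := abs_mul _ _
      _ ≤ |l| * M := by gcongr
  have hintsum : Integrable (fun ω => Real.exp (l * (∑ i, W i) ω)) μ :=
    hindep.integrable_exp_mul_sum hmeas (fun i _ => hint i)
  have hchern := measure_ge_le_exp_mul_mgf (μ := μ) (X := ∑ i, W i) ((n : ℝ) * ε) hl0.le hintsum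
  have hmgf : mgf (∑ i, W i) μ l ≤ Real.exp ((n : ℝ) * (l ^ 2 * M ^ 2 / 2)) := by
    rw [hindep.mgf_sum hmeas Finset.univ]
    calc ∏ i, mgf (W i) μ l ≤ ∏ (_ : Fin n), Real.exp (l ^ 2 * M ^ 2 / 2) := by
          refine Finset.prod_le_prod (fun i _ => mgf_nonneg) (fun i _ => ?_)
          exact mgf_le_of_bounded μ (W i) (hmeas i) M l hM (hb i) (hcent i)
      _ = Real.exp ((n : ℝ) * (l ^ 2 * M ^ 2 / 2)) := by
          rw [Finset.prod_const, ← Real.exp_nat_mul]; simp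
  have hbd : Real.exp (-l * ((n : ℝ) * ε)) * mgf (∑ i, W i) μ l ≤
      Real.exp (-(n : ℝ) * ε ^ 2 / (2 * M ^ 2)) := by
    calc Real.exp (-l * ((n : ℝ) * ε)) * mgf (∑ i, W i) μ l
        ≤ Real.exp (-l * ((n : ℝ) * ε)) * Real.exp ((n : ℝ) * (l ^ 2 * M ^ 2 / 2)) := by
          exact mul_le_mul_of_nonneg_left hmgf (Real.exp_nonneg _)
      _ = Real.exp (-(n : ℝ) * ε ^ 2 / (2 * M ^ 2)) := by
          rw [← Real.exp_add]
          congr 1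
          have hM2 : (M : ℝ) ^ 2 ≠ 0 := by positivity
          rw [hl]
          field_simp
          ring
  have hfin : μ {ω | (n : ℝ) * ε ≤ ∑ i, W i ω} ≠ ⊤ := measure_ne_top _ _
  have : (μ {ω | (n : ℝ) * ε ≤ (∑ i, W i) ω}).toReal ≤
      Real.exp (-(n : ℝ) * ε ^ 2 / (2 * M ^ 2)) := hchern.trans hbd
  rw [← ENNReal.ofReal_toReal hfin]
  exact ENNReal.ofReal_le_ofReal (by simpa using this)

lemma hoeffding_two_sided {Ω : Type*} [MeasurableSpace Ω] (μ : Measure Ω) [IsProbabilityMeasure μ]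
    {n : ℕ} (Z : Fin n → Ω → ℝ) (hmeas : ∀ i, Measurable (Z i))
    (hindep : iIndepFun Z μ)
    (B t a : ℝ) (hB : 0 < B) (ht : 0 < t)
    (hb : ∀ i, ∀ᵐ ω ∂μ, |Z i ω| ≤ B) (ha : |a| ≤ B)
    (hmean : ∀ i, ∫ ω, Z i ω ∂μ = a) :
    μ {ω | (n : ℝ) * t < |(∑ i, Z i ω) - n * a|} ≤
      ENNReal.ofReal (2 * Real.exp (-(n : ℝ) * t ^ 2 / (8 * B ^ 2))) := by
  have hZint : ∀ i, Integrable (Z i) μ := by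
    intro i
    refine Integrable.mono' (integrable_const B) (hmeas i).aestronglyMeasurable ?_
    filter_upwards [hb i] with ω h using by simpa [Real.norm_eq_abs] using h
  set W : Fin n → Ω → ℝ := fun i ω => Z i ω - a with hW
  set W' : Fin n → Ω → ℝ := fun i ω => a - Z i ω with hW'
  have hWmeas : ∀ i, Measurable (W i) := fun i => (hmeas i).sub measurable_const
  have hW'meas : ∀ i, Measurable (W' i) := fun i => measurable_const.sub (hmeas i)
  have hWindep : iIndepFun W μ :=
    hindep.comp (fun _ x => x - a) (fun _ => measurable_id.sub measurable_const)
  have hW'indep : iIndepFun W' μ :=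
    hindep.comp (fun _ x => a - x) (fun _ => measurable_const.sub measurable_id)
  have hWb : ∀ i, ∀ᵐ ω ∂μ, |W i ω| ≤ 2 * B := by
    intro i; filter_upwards [hb i] with ω h
    calc |Z i ω - a| ≤ |Z i ω| + |a| := abs_sub _ _
      _ ≤ 2 * B := by linarith
  have hW'b : ∀ i, ∀ᵐ ω ∂μ, |W' i ω| ≤ 2 * B := by
    intro i; filter_upwards [hWb i] with ω h using by rwa [hW', abs_sub_comm]
  have hWcent : ∀ i, ∫ ω, W i ω ∂μ = 0 := by
    intro i; rw [hW]
    simp only [integral_sub (hZint i) (integrable_const a), hmean i, integral_const]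
    simp
  have hW'cent : ∀ i, ∫ ω, W' i ω ∂μ = 0 := by
    intro i; rw [hW']
    simp only [integral_sub (integrable_const a) (hZint i), hmean i, integral_const]
    simp
  have h1 := hoeffding_sum_ge μ W hWmeas hWindep (2 * B) t (by linarith) ht hWb hWcent
  have h2 := hoeffding_sum_ge μ W' hW'meas hW'indep (2 * B) t (by linarith) ht hW'b hW'cent
  have hsumW : ∀ ω, (∑ i, W i ω) = (∑ i, Z i ω) - n * a := by
    intro ω; simp [hW, Finset.sum_sub_distrib, mul_comm]
  have hsumW' : ∀ ω, (∑ i, W' i ω) = n * a - (∑ i, Z i ω) := by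
    intro ω; simp [hW', Finset.sum_sub_distrib, mul_comm]
  have hsub : {ω | (n : ℝ) * t < |(∑ i, Z i ω) - n * a|} ⊆
      {ω | (n : ℝ) * t ≤ ∑ i, W i ω} ∪ {ω | (n : ℝ) * t ≤ ∑ i, W' i ω} := by
    intro ω hω
    simp only [Set.mem_setOf_eq] at hω
    rcases lt_abs.mp hω with h | h
    · left; simp only [Set.mem_setOf_eq, hsumW]; linarith
    · right; simp only [Set.mem_setOf_eq, hsumW']; linarith
  have hexp : -(n : ℝ) * t ^ 2 / (2 * (2 * B) ^ 2) = -(n : ℝ) * t ^ 2 / (8 * B ^ 2) := by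
    ring_nf
  calc μ {ω | (n : ℝ) * t < |(∑ i, Z i ω) - n * a|}
      ≤ μ ({ω | (n : ℝ) * t ≤ ∑ i, W i ω} ∪ {ω | (n : ℝ) * t ≤ ∑ i, W' i ω}) :=
        measure_mono hsub
    _ ≤ μ {ω | (n : ℝ) * t ≤ ∑ i, W i ω} + μ {ω | (n : ℝ) * t ≤ ∑ i, W' i ω} :=
        measure_union_le _ _
    _ ≤ ENNReal.ofReal (Real.exp (-(n : ℝ) * t ^ 2 / (2 * (2 * B) ^ 2))) +
        ENNReal.ofReal (Real.exp (-(n : ℝ) * t ^ 2 / (2 * (2 * B) ^ 2))) := by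
        refine add_le_add ?_ ?_
        · simpa using h1
        · simpa using h2
    _ = ENNReal.ofReal (2 * Real.exp (-(n : ℝ) * t ^ 2 / (8 * B ^ 2))) := by
        rw [hexp, ← ENNReal.ofReal_add (Real.exp_nonneg _) (Real.exp_nonneg _)]
        congr 1; ring

lemma re_deterministic {p : ℕ} (s₀ : ℕ) (hs₀ : 0 < s₀) (τ c K₂ t : ℝ)
    (hτ : 1 ≤ τ) (hc : 0 < c) (hK₂ : 1 ≤ K₂)
    (ht : t = c / K₂ / (2 * (1 + τ) ^ 2 * s₀))
    (H a : Fin p → Fin p → ℝ)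
    (hHa : ∀ k l, |H k l - a k l| ≤ t)
    (hquad : ∀ ν : Fin p → ℝ, (c / K₂) * ∑ k, (ν k) ^ 2 ≤ ∑ k, ∑ l, ν k * a k l * ν l)
    (S : Finset (Fin p)) (hS : S.card = s₀) (ν : Fin p → ℝ)
    (hν : (∑ j ∈ Sᶜ, |ν j|) ≤ τ * ∑ j ∈ S, |ν j|) :
    (c / K₂ / 2) * ∑ j ∈ S, (ν j) ^ 2 ≤ ∑ k, ∑ l, ν k * H k l * ν l := by
  have hτ0 : (0:ℝ) < 1 + τ := by linarith
  have hK₂0 : (0:ℝ) < K₂ := by linarith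
  have ht0 : 0 ≤ t := by rw [ht]; positivity
  set σ : ℝ := ∑ j ∈ S, |ν j| with hσ
  set q : ℝ := ∑ j ∈ S, (ν j) ^ 2 with hq
  have hσ0 : 0 ≤ σ := Finset.sum_nonneg fun j _ => abs_nonneg _
  have hq0 : 0 ≤ q := Finset.sum_nonneg fun j _ => sq_nonneg _
  -- ℓ¹ bound
  have h1 : (∑ k, |ν k|) ≤ (1 + τ) * σ := by
    rw [← Finset.sum_add_sum_compl S fun j => |ν j|]
    have := hν
    nlinarith [hσ0]
  have h1' : 0 ≤ ∑ k, |ν k| := Finset.sum_nonneg fun j _ => abs_nonneg _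
  -- Cauchy–Schwarz
  have hCS : σ ^ 2 ≤ (s₀ : ℝ) * q := by
    have := sq_sum_le_card_mul_sum_sq (s := S) (f := fun j => |ν j|)
    simp only [sq_abs] at this
    rw [hS] at this
    exact_mod_cast this
  -- perturbation bound
  have hdiff : |(∑ k, ∑ l, ν k * H k l * ν l) - ∑ k, ∑ l, ν k * a k l * ν l| ≤
      t * (∑ k, |ν k|) ^ 2 := by
    have he : (∑ k, ∑ l, ν k * H k l * ν l) - (∑ k, ∑ l, ν k * a k l * ν l) =
        ∑ k, ∑ l, ν k * (H k l - a k l) * ν l := by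
      rw [← Finset.sum_sub_distrib]
      refine Finset.sum_congr rfl fun k _ => ?_
      rw [← Finset.sum_sub_distrib]
      exact Finset.sum_congr rfl fun l _ => by ring
    rw [he]
    calc |∑ k, ∑ l, ν k * (H k l - a k l) * ν l|
        ≤ ∑ k, |∑ l, ν k * (H k l - a k l) * ν l| := Finset.abs_sum_le_sum_abs _ _
      _ ≤ ∑ k, ∑ l, |ν k * (H k l - a k l) * ν l| :=
          Finset.sum_le_sum fun k _ => Finset.abs_sum_le_sum_abs _ _
      _ ≤ ∑ k, ∑ l, |ν k| * t * |ν l| := by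
          refine Finset.sum_le_sum fun k _ => Finset.sum_le_sum fun l _ => ?_
          rw [abs_mul, abs_mul]
          refine mul_le_mul (mul_le_mul_of_nonneg_left (hHa k l) (abs_nonneg _)) le_rfl
            (abs_nonneg _) (mul_nonneg (abs_nonneg _) ((abs_nonneg _).trans (hHa k l)))
      _ = t * (∑ k, |ν k|) ^ 2 := by
          rw [sq, Finset.sum_mul_sum]
          rw [Finset.mul_sum]
          refine Finset.sum_congr rfl fun k _ => ?_
          rw [Finset.mul_sum]
          exact Finset.sum_congr rfl fun l _ => by ring
  -- combine
  have hkey : t * (∑ k, |ν k|) ^ 2 ≤ (c / K₂ / 2) * q := by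
    have h2 : (∑ k, |ν k|) ^ 2 ≤ (1 + τ) ^ 2 * σ ^ 2 := by
      rw [← mul_pow]
      exact pow_le_pow_left₀ h1' h1 2
    have h3 : (∑ k, |ν k|) ^ 2 ≤ (1 + τ) ^ 2 * ((s₀ : ℝ) * q) := by
      refine h2.trans ?_
      exact mul_le_mul_of_nonneg_left hCS (by positivity)
    calc t * (∑ k, |ν k|) ^ 2 ≤ t * ((1 + τ) ^ 2 * ((s₀ : ℝ) * q)) := by gcongr
      _ = (c / K₂ / 2) * q := by
          rw [ht]
          have hs : (s₀ : ℝ) ≠ 0 := Nat.cast_ne_zero.mpr hs₀.ne'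
          field_simp
  have hmono : q ≤ ∑ k, (ν k) ^ 2 :=
    Finset.sum_le_sum_of_subset_of_nonneg (Finset.subset_univ S) fun k _ _ => sq_nonneg _
  have hquad' := hquad ν
  have habs := abs_le.mp hdiff
  have hcK : 0 ≤ c / K₂ := by positivity
  nlinarith [hquad', habs.1, hkey, hmono, hcK, hq0]

lemma sum_integral_swap {Ω : Type*} [MeasurableSpace Ω] (μ : Measure Ω) {p : ℕ} (ν : Fin p → ℝ)
    (f : Fin p → Fin p → Ω → ℝ) (hf : ∀ k l, Integrable (f k l) μ) :
    ∑ k, ∑ l, ν k * (∫ ω, f k l ω ∂μ) * ν l = ∫ ω, ∑ k, ∑ l, ν k * f k l ω * ν l ∂μ := by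
  have h1 : ∀ k l, Integrable (fun ω => ν k * f k l ω * ν l) μ := fun k l =>
    ((hf k l).const_mul _).mul_const _
  rw [integral_finset_sum _ (fun k _ => integrable_finset_sum _ (fun l _ => h1 k l))]
  refine Finset.sum_congr rfl fun k _ => ?_
  rw [integral_finset_sum _ (fun l _ => h1 k l)]
  refine Finset.sum_congr rfl fun l _ => ?_
  rw [← integral_const_mul, ← integral_mul_const]

lemma quad_rearrange {p m : ℕ} (ν : Fin p → ℝ) (w : Fin m → ℝ) (x : Fin m → Fin p → ℝ) :
    ∑ k, ∑ l, ν k * (∑ j, w j * x j k * x j l) * ν l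
      = ∑ j, w j * (∑ k, ν k * x j k) ^ 2 := by
  have expand : ∀ k l, ν k * (∑ j, w j * x j k * x j l) * ν l
      = ∑ j, w j * (ν k * x j k) * (ν l * x j l) := fun k l => by
    rw [Finset.mul_sum, Finset.sum_mul]
    exact Finset.sum_congr rfl fun j _ => by ring
  simp_rw [expand]
  rw [show (∑ k, ∑ l, ∑ j, w j * (ν k * x j k) * (ν l * x j l))
      = ∑ k, ∑ j, ∑ l, w j * (ν k * x j k) * (ν l * x j l) from
    Finset.sum_congr rfl fun k _ => Finset.sum_comm, Finset.sum_comm]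
  refine Finset.sum_congr rfl fun j _ => ?_
  rw [sq, Finset.sum_mul_sum, Finset.mul_sum]
  refine Finset.sum_congr rfl fun k _ => ?_
  rw [Finset.mul_sum]
  exact Finset.sum_congr rfl fun l _ => by ring

/-- With probability at least
`1 − 2p²exp(−nt²/(8m²K₂²K⁴))`, where `τ₀ = c/K₂` and `t = τ₀/(2(1+τ)²s₀)`, the weighted
Gram matrix `H = (1/n)Σᵢ Σⱼ g(x_{ij}) x_{ij}x_{ij}ᵀ` satisfies the restricted eigenvalue
property `νᵀHν ≥ (τ₀/2)‖ν_S‖₂²` simultaneously for all `S` with `|S| = s₀` and all `ν` in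
the cone `‖ν_{Sᶜ}‖₁ ≤ τ‖ν_S‖₁`. -/
theorem restricted_eigenvalue_high_probability
    {Ω : Type*} [MeasurableSpace Ω] (μ : Measure Ω) [IsProbabilityMeasure μ]
    (n m p s₀ : ℕ) (hn : 0 < n) (hm : 0 < m) (hp : 0 < p) (hs₀ : 0 < s₀)
    (τ K K₂ c : ℝ) (hτ : 1 ≤ τ) (hK : 0 < K) (hK₂ : 1 ≤ K₂) (hc : 0 < c)
    (X : Fin n → Ω → Fin m → Fin p → ℝ)
    (hmeas : ∀ i, Measurable (X i))
    (hindep : iIndepFun X μ)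
    (hident : ∀ i i', IdentDistrib (X i) (X i') μ μ)
    (hbdd : ∀ i, ∀ᵐ ω ∂μ, ∀ j k, |X i ω j k| ≤ K)
    (g : (Fin p → ℝ) → ℝ) (hg : Measurable g)
    (hg_lb : ∀ x, K₂⁻¹ ≤ g x) (hg_ub : ∀ x, g x ≤ K₂)
    (heig : ∀ ν : Fin p → ℝ,
      c * ∑ k, (ν k) ^ 2 ≤
        ∑ k, ∑ l, ν k * (∫ ω, ∑ j, X ⟨0, hn⟩ ω j k * X ⟨0, hn⟩ ω j l ∂μ) * ν l) :
    1 - ENNReal.ofReal (2 * p ^ 2 *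
        Real.exp (-(n * (c / K₂ / (2 * (1 + τ) ^ 2 * s₀)) ^ 2) /
          (8 * m ^ 2 * K₂ ^ 2 * K ^ 4))) ≤
      μ {ω | ∀ S : Finset (Fin p), S.card = s₀ →
          ∀ ν : Fin p → ℝ, (∑ j ∈ Sᶜ, |ν j|) ≤ τ * ∑ j ∈ S, |ν j| →
            (c / K₂ / 2) * ∑ j ∈ S, (ν j) ^ 2 ≤
              ∑ k, ∑ l, ν k *
                ((n : ℝ)⁻¹ * ∑ i, ∑ j, g (X i ω j) * X i ω j k * X i ω j l) * ν l} := by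
  classical
  have hK₂0 : (0:ℝ) < K₂ := by linarith
  have hm' : (0:ℝ) < m := Nat.cast_pos.mpr hm
  have hn' : (0:ℝ) < n := Nat.cast_pos.mpr hn
  have hs' : (0:ℝ) < s₀ := Nat.cast_pos.mpr hs₀
  have hτ' : (0:ℝ) < 1 + τ := by linarith
  set B : ℝ := m * K₂ * K ^ 2 with hBdef
  have hB : 0 < B := by rw [hBdef]; exact mul_pos (mul_pos hm' hK₂0) (pow_pos hK 2)
  set t : ℝ := c / K₂ / (2 * (1 + τ) ^ 2 * s₀) with htdef
  have ht : 0 < t := by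
    rw [htdef]
    exact div_pos (div_pos hc hK₂0) (mul_pos (mul_pos two_pos (pow_pos hτ' 2)) hs')
  set Z : Fin p → Fin p → (Fin m → Fin p → ℝ) → ℝ :=
    fun k l x => ∑ j, g (x j) * x j k * x j l with hZdef
  have hZmeas : ∀ k l, Measurable (Z k l) := by
    intro k l
    refine Finset.measurable_sum _ fun j _ => ?_
    exact ((hg.comp (measurable_pi_apply j)).mul
      ((measurable_pi_apply k).comp (measurable_pi_apply j))).mul
      ((measurable_pi_apply l).comp (measurable_pi_apply j))
  have hgabs : ∀ x, |g x| ≤ K₂ := fun x => by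
    rw [abs_of_pos (lt_of_lt_of_le (by positivity) (hg_lb x))]; exact hg_ub x
  have hZbd : ∀ k l (x : Fin m → Fin p → ℝ), (∀ j k', |x j k'| ≤ K) → |Z k l x| ≤ B := by
    intro k l x hx
    calc |Z k l x| ≤ ∑ j, |g (x j) * x j k * x j l| := Finset.abs_sum_le_sum_abs _ _
      _ ≤ ∑ (_ : Fin m), K₂ * K * K := by
          refine Finset.sum_le_sum fun j _ => ?_
          rw [abs_mul, abs_mul]
          refine mul_le_mul (mul_le_mul (hgabs _) (hx j k) (abs_nonneg _) hK₂0.le)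
            (hx j l) (abs_nonneg _) (by positivity)
      _ = B := by rw [Finset.sum_const, Finset.card_univ, Fintype.card_fin, hBdef]
                  push_cast; ring
  have hbd' : ∀ i, ∀ᵐ ω ∂μ, ∀ k l, |Z k l (X i ω)| ≤ B := by
    intro i
    filter_upwards [hbdd i] with ω h
    exact fun k l => hZbd k l _ h
  have hZint : ∀ k l i, Integrable (fun ω => Z k l (X i ω)) μ := by
    intro k l i
    refine Integrable.mono' (integrable_const B)
      ((hZmeas k l).comp (hmeas i)).aestronglyMeasurable ?_
    filter_upwards [hbd' i] with ω h using by simpa [Real.norm_eq_abs] using h k l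
  set a : Fin p → Fin p → ℝ := fun k l => ∫ ω, Z k l (X ⟨0, hn⟩ ω) ∂μ with hadef
  have hmean : ∀ k l i, ∫ ω, Z k l (X i ω) ∂μ = a k l := fun k l i =>
    ((hident i ⟨0, hn⟩).comp (hZmeas k l)).integral_eq
  have haB : ∀ k l, |a k l| ≤ B := by
    intro k l
    have h1 : ‖∫ ω, Z k l (X ⟨0, hn⟩ ω) ∂μ‖ ≤ ∫ ω, ‖Z k l (X ⟨0, hn⟩ ω)‖ ∂μ :=
      norm_integral_le_integral_norm _
    have h2 : ∫ ω, ‖Z k l (X ⟨0, hn⟩ ω)‖ ∂μ ≤ ∫ (_ : Ω), B ∂μ := by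
      refine integral_mono_ae (hZint k l ⟨0, hn⟩).norm (integrable_const _) ?_
      filter_upwards [hbd' ⟨0, hn⟩] with ω h using by simpa [Real.norm_eq_abs] using h k l
    rw [integral_const] at h2
    simp only [probReal_univ, measure_univ, ENNReal.toReal_one, smul_eq_mul, one_mul] at h2
    calc |a k l| = ‖∫ ω, Z k l (X ⟨0, hn⟩ ω) ∂μ‖ := by rw [hadef, Real.norm_eq_abs]
      _ ≤ B := h1.trans h2
  -- Hoeffding bound for each entry
  have hbad : ∀ k l, μ {ω | (n : ℝ) * t < |(∑ i, Z k l (X i ω)) - n * a k l|} ≤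
      ENNReal.ofReal (2 * Real.exp (-(n : ℝ) * t ^ 2 / (8 * B ^ 2))) := by
    intro k l
    have hind : iIndepFun (fun i ω => Z k l (X i ω)) μ :=
      hindep.comp (fun _ => Z k l) (fun _ => hZmeas k l)
    exact hoeffding_two_sided μ (fun i ω => Z k l (X i ω))
      (fun i => (hZmeas k l).comp (hmeas i)) hind B t (a k l) hB ht
      (fun i => by filter_upwards [hbd' i] with ω h using h k l) (haB k l)
      (fun i => hmean k l i)
  set G : Set Ω := {ω | ∀ k l, |(∑ i, Z k l (X i ω)) - n * a k l| ≤ n * t} with hGdef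
  have hGc : μ Gᶜ ≤ ENNReal.ofReal (2 * (p : ℝ) ^ 2 *
      Real.exp (-(n : ℝ) * t ^ 2 / (8 * B ^ 2))) := by
    have hsub : Gᶜ ⊆ ⋃ k, ⋃ l,
        {ω | (n : ℝ) * t < |(∑ i, Z k l (X i ω)) - n * a k l|} := by
      intro ω hω
      simp only [hGdef, Set.mem_compl_iff, Set.mem_setOf_eq, not_forall, not_le] at hω
      obtain ⟨k, l, h⟩ := hω
      exact Set.mem_iUnion.mpr ⟨k, Set.mem_iUnion.mpr ⟨l, h⟩⟩
    calc μ Gᶜ ≤ μ (⋃ k, ⋃ l, {ω | (n : ℝ) * t < |(∑ i, Z k l (X i ω)) - n * a k l|}) :=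
          measure_mono hsub
      _ ≤ ∑' (k : Fin p), μ (⋃ l, {ω | (n : ℝ) * t < |(∑ i, Z k l (X i ω)) - n * a k l|}) :=
          measure_iUnion_le _
      _ ≤ ∑' (k : Fin p), ∑' (l : Fin p),
            μ {ω | (n : ℝ) * t < |(∑ i, Z k l (X i ω)) - n * a k l|} :=
          ENNReal.tsum_le_tsum fun k => measure_iUnion_le _
      _ ≤ ∑' (k : Fin p), ∑' (l : Fin p),
            ENNReal.ofReal (2 * Real.exp (-(n : ℝ) * t ^ 2 / (8 * B ^ 2))) :=
          ENNReal.tsum_le_tsum fun k => ENNReal.tsum_le_tsum fun l => hbad k l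
      _ = (p : ENNReal) * ((p : ENNReal) *
            ENNReal.ofReal (2 * Real.exp (-(n : ℝ) * t ^ 2 / (8 * B ^ 2)))) := by
          simp [tsum_fintype, Finset.sum_const, Finset.card_univ, nsmul_eq_mul, mul_assoc]
      _ = ENNReal.ofReal (2 * (p : ℝ) ^ 2 *
            Real.exp (-(n : ℝ) * t ^ 2 / (8 * B ^ 2))) := by
          rw [show (2 * (p : ℝ) ^ 2 * Real.exp (-(n : ℝ) * t ^ 2 / (8 * B ^ 2)))
              = (p : ℝ) * ((p : ℝ) * (2 * Real.exp (-(n : ℝ) * t ^ 2 / (8 * B ^ 2)))) by ring,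
            ENNReal.ofReal_mul (by positivity), ENNReal.ofReal_mul (by positivity),
            ENNReal.ofReal_mul (by norm_num)]
          simp [ENNReal.ofReal_natCast]
  -- the good event implies the RE property
  have hquad : ∀ ν : Fin p → ℝ,
      (c / K₂) * ∑ k, (ν k) ^ 2 ≤ ∑ k, ∑ l, ν k * a k l * ν l := by
    intro ν
    have e1 : ∑ k, ∑ l, ν k * a k l * ν l
        = ∫ ω, ∑ k, ∑ l, ν k * Z k l (X ⟨0, hn⟩ ω) * ν l ∂μ :=
      sum_integral_swap μ ν (fun k l ω => Z k l (X ⟨0, hn⟩ ω)) (fun k l => hZint k l ⟨0, hn⟩)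
    have hbint : ∀ k l : Fin p,
        Integrable (fun ω => ∑ j, X ⟨0, hn⟩ ω j k * X ⟨0, hn⟩ ω j l) μ := by
      intro k l
      refine Integrable.mono' (integrable_const ((m : ℝ) * K ^ 2))
        (Finset.measurable_sum _ fun j _ =>
          (((measurable_pi_apply k).comp ((measurable_pi_apply j).comp (hmeas ⟨0, hn⟩))).mul
            ((measurable_pi_apply l).comp
              ((measurable_pi_apply j).comp (hmeas ⟨0, hn⟩))))).aestronglyMeasurable ?_
      filter_upwards [hbdd ⟨0, hn⟩] with ω h
      rw [Real.norm_eq_abs]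
      calc |∑ j, X ⟨0, hn⟩ ω j k * X ⟨0, hn⟩ ω j l|
          ≤ ∑ j, |X ⟨0, hn⟩ ω j k * X ⟨0, hn⟩ ω j l| := Finset.abs_sum_le_sum_abs _ _
        _ ≤ ∑ (_ : Fin m), K * K := by
            refine Finset.sum_le_sum fun j _ => ?_
            rw [abs_mul]
            exact mul_le_mul (h j k) (h j l) (abs_nonneg _) hK.le
        _ = (m : ℝ) * K ^ 2 := by
            rw [Finset.sum_const, Finset.card_univ, Fintype.card_fin]; push_cast; ring
    have e2 : ∑ k, ∑ l, ν k * (∫ ω, ∑ j, X ⟨0, hn⟩ ω j k * X ⟨0, hn⟩ ω j l ∂μ) * ν l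
        = ∫ ω, ∑ k, ∑ l, ν k * (∑ j, X ⟨0, hn⟩ ω j k * X ⟨0, hn⟩ ω j l) * ν l ∂μ :=
      sum_integral_swap μ ν _ hbint
    have hpt : ∀ (x : Fin m → Fin p → ℝ),
        K₂⁻¹ * ∑ k, ∑ l, ν k * (∑ j, x j k * x j l) * ν l
          ≤ ∑ k, ∑ l, ν k * Z k l x * ν l := by
      intro x
      have r2 : ∑ k, ∑ l, ν k * Z k l x * ν l
          = ∑ j, g (x j) * (∑ k, ν k * x j k) ^ 2 := quad_rearrange ν (fun j => g (x j)) x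
      have r1 : ∑ k, ∑ l, ν k * (∑ j, x j k * x j l) * ν l
          = ∑ j, (∑ k, ν k * x j k) ^ 2 := by
        have := quad_rearrange ν (fun _ => (1 : ℝ)) x
        simpa using this
      rw [r2, r1, Finset.mul_sum]
      refine Finset.sum_le_sum fun j _ => ?_
      exact mul_le_mul_of_nonneg_right (hg_lb (x j)) (sq_nonneg _)
    have hint1 : Integrable (fun ω => ∑ k, ∑ l, ν k * Z k l (X ⟨0, hn⟩ ω) * ν l) μ :=
      integrable_finset_sum _ fun k _ => integrable_finset_sum _ fun l _ =>
        ((hZint k l ⟨0, hn⟩).const_mul _).mul_const _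
    have hint2 : Integrable (fun ω =>
        K₂⁻¹ * ∑ k, ∑ l, ν k * (∑ j, X ⟨0, hn⟩ ω j k * X ⟨0, hn⟩ ω j l) * ν l) μ :=
      (integrable_finset_sum _ fun k _ => integrable_finset_sum _ fun l _ =>
        ((hbint k l).const_mul _).mul_const _).const_mul _
    have hmono := integral_mono hint2 hint1 (fun ω => hpt (X ⟨0, hn⟩ ω))
    calc (c / K₂) * ∑ k, (ν k) ^ 2 = K₂⁻¹ * (c * ∑ k, (ν k) ^ 2) := by ring
      _ ≤ K₂⁻¹ * ∑ k, ∑ l,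
            ν k * (∫ ω, ∑ j, X ⟨0, hn⟩ ω j k * X ⟨0, hn⟩ ω j l ∂μ) * ν l :=
          mul_le_mul_of_nonneg_left (heig ν) (inv_nonneg.mpr hK₂0.le)
      _ = ∫ ω, K₂⁻¹ * ∑ k, ∑ l,
            ν k * (∑ j, X ⟨0, hn⟩ ω j k * X ⟨0, hn⟩ ω j l) * ν l ∂μ := by
          rw [e2, ← integral_const_mul]
      _ ≤ ∫ ω, ∑ k, ∑ l, ν k * Z k l (X ⟨0, hn⟩ ω) * ν l ∂μ := hmono
      _ = ∑ k, ∑ l, ν k * a k l * ν l := e1.symm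
  have hGsub : G ⊆ {ω | ∀ S : Finset (Fin p), S.card = s₀ →
      ∀ ν : Fin p → ℝ, (∑ j ∈ Sᶜ, |ν j|) ≤ τ * ∑ j ∈ S, |ν j| →
        (c / K₂ / 2) * ∑ j ∈ S, (ν j) ^ 2 ≤
          ∑ k, ∑ l, ν k *
            ((n : ℝ)⁻¹ * ∑ i, ∑ j, g (X i ω j) * X i ω j k * X i ω j l) * ν l} := by
    intro ω hω
    simp only [hGdef, Set.mem_setOf_eq] at hω ⊢
    intro S hS ν hν
    have hH : ∀ k l, |(n : ℝ)⁻¹ * (∑ i, Z k l (X i ω)) - a k l| ≤ t := by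
      intro k l
      have h := hω k l
      have he : (n : ℝ)⁻¹ * (∑ i, Z k l (X i ω)) - a k l
          = (n : ℝ)⁻¹ * ((∑ i, Z k l (X i ω)) - n * a k l) := by
        field_simp
      rw [he, abs_mul, abs_of_pos (inv_pos.mpr hn')]
      calc (n : ℝ)⁻¹ * |(∑ i, Z k l (X i ω)) - n * a k l| ≤ (n : ℝ)⁻¹ * (n * t) := by gcongr
        _ = t := by field_simp
    have := re_deterministic s₀ hs₀ τ c K₂ t hτ hc hK₂ htdef
      (fun k l => (n : ℝ)⁻¹ * ∑ i, Z k l (X i ω)) a hH hquad S hS ν hν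
    simpa only [hZdef] using this
  have hunion : (1 : ENNReal) ≤ μ {ω | ∀ S : Finset (Fin p), S.card = s₀ →
      ∀ ν : Fin p → ℝ, (∑ j ∈ Sᶜ, |ν j|) ≤ τ * ∑ j ∈ S, |ν j| →
        (c / K₂ / 2) * ∑ j ∈ S, (ν j) ^ 2 ≤
          ∑ k, ∑ l, ν k *
            ((n : ℝ)⁻¹ * ∑ i, ∑ j, g (X i ω j) * X i ω j k * X i ω j l) * ν l}
      + ENNReal.ofReal (2 * (p : ℝ) ^ 2 * Real.exp (-(n : ℝ) * t ^ 2 / (8 * B ^ 2))) := by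
    calc (1 : ENNReal) = μ Set.univ := measure_univ.symm
      _ = μ (G ∪ Gᶜ) := by rw [Set.union_compl_self]
      _ ≤ μ G + μ Gᶜ := measure_union_le _ _
      _ ≤ _ := add_le_add (measure_mono hGsub) hGc
  have hexp : -(n : ℝ) * t ^ 2 / (8 * B ^ 2)
      = -((n : ℝ) * t ^ 2) / (8 * (m : ℝ) ^ 2 * K₂ ^ 2 * K ^ 4) := by
    rw [hBdef]; ring
  rw [hexp] at hunion
  exact tsub_le_iff_right.mpr hunion
end
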